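/- arXiv:2201.04707 — 3 statements merged into one kernel-verified Lean document; each statement's English description precedes it below -/
import Mathlib

section
/- Extension lemma: let Γ be a set of σ-sentences and Δ a set of σ-formulas with Γ ⊬ Δ. Then for every set S of cardinality |Sent_σ| there exists a saturated σ_S-theory Γ′ ⊇ Γ such that Γ′ ⊬ Δ (derivability now taken in the calculus QBK_{σ_S}). -/
/-! Signatures, terms, formulas -/

structure Sig where
  Pred : Type
  arity : Pred → ℕ
  Const : Type

inductive Term (σ : Sig) where
  | var : ℕ → Term σ
  | const : σ.Const → Term σ

inductive Formula (σ : Sig) where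
  | atom (P : σ.Pred) (ts : Fin (σ.arity P) → Term σ) : Formula σ
  | bot : Formula σ
  | imp : Formula σ → Formula σ → Formula σ
  | and : Formula σ → Formula σ → Formula σ
  | or : Formula σ → Formula σ → Formula σ
  | snot : Formula σ → Formula σ
  | box : Formula σ → Formula σ
  | dia : Formula σ → Formula σ
  | all : ℕ → Formula σ → Formula σ
  | ex : ℕ → Formula σ → Formula σ

def Term.fv {σ : Sig} : Term σ → Finset ℕ
  | .var x => {x}
  | .const _ => ∅

def Term.substT {σ : Sig} (x : ℕ) (t : Term σ) : Term σ → Term σ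
  | .var y => if y = x then t else .var y
  | .const c => .const c

def Formula.fv {σ : Sig} : Formula σ → Finset ℕ
  | .atom _ ts => Finset.univ.biUnion fun i => (ts i).fv
  | .bot => ∅
  | .imp A B => A.fv ∪ B.fv
  | .and A B => A.fv ∪ B.fv
  | .or A B => A.fv ∪ B.fv
  | .snot A => A.fv
  | .box A => A.fv
  | .dia A => A.fv
  | .all x A => A.fv.erase x
  | .ex x A => A.fv.erase x

/-- Simultaneous substitution of the term `t` for the free occurrences of the variable `x`. -/
def Formula.subst {σ : Sig} (x : ℕ) (t : Term σ) : Formula σ → Formula σ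
  | .atom P ts => .atom P fun i => (ts i).substT x t
  | .bot => .bot
  | .imp A B => (A.subst x t).imp (B.subst x t)
  | .and A B => (A.subst x t).and (B.subst x t)
  | .or A B => (A.subst x t).or (B.subst x t)
  | .snot A => (A.subst x t).snot
  | .box A => (A.subst x t).box
  | .dia A => (A.subst x t).dia
  | .all y A => if y = x then .all y A else .all y (A.subst x t)
  | .ex y A => if y = x then .ex y A else .ex y (A.subst x t)

/-- `t` is free for `x` in the formula. -/
def FreeFor {σ : Sig} (x : ℕ) (t : Term σ) : Formula σ → Prop
  | .atom _ _ => True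
  | .bot => True
  | .imp A B => FreeFor x t A ∧ FreeFor x t B
  | .and A B => FreeFor x t A ∧ FreeFor x t B
  | .or A B => FreeFor x t A ∧ FreeFor x t B
  | .snot A => FreeFor x t A
  | .box A => FreeFor x t A
  | .dia A => FreeFor x t A
  | .all y A => x ∉ (Formula.all y A).fv ∨ (y ∉ t.fv ∧ FreeFor x t A)
  | .ex y A => x ∉ (Formula.ex y A).fv ∨ (y ∉ t.fv ∧ FreeFor x t A)

/-- Material negation ¬Φ := Φ → ⊥. -/
def Formula.neg {σ : Sig} (A : Formula σ) : Formula σ := A.imp .bot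

/-- Material equivalence Φ ↔ Ψ. -/
def Formula.fiff {σ : Sig} (A B : Formula σ) : Formula σ := (A.imp B).and (B.imp A)

/-- Strong equivalence Φ ⇔ Ψ := (Φ↔Ψ) ∧ (∼Φ↔∼Ψ). -/
def Formula.siff {σ : Sig} (A B : Formula σ) : Formula σ := (A.fiff B).and (A.snot.fiff B.snot)

/-- A sentence is a formula with no free variables. -/
def Sentence {σ : Sig} (A : Formula σ) : Prop := A.fv = ∅

/-! The Hilbert-style calculus: QBK and its extensions by extra axiom schemes `Ex`. -/

inductive QBKext (σ : Sig) (Ex : Formula σ → Prop) : Formula σ → Prop where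
  | extra {A} : Ex A → QBKext σ Ex A
  | i1 (A B : Formula σ) : QBKext σ Ex (A.imp (B.imp A))
  | i2 (A B C : Formula σ) : QBKext σ Ex ((A.imp (B.imp C)).imp ((A.imp B).imp (A.imp C)))
  | c1 (A B : Formula σ) : QBKext σ Ex ((A.and B).imp A)
  | c2 (A B : Formula σ) : QBKext σ Ex ((A.and B).imp B)
  | c3 (A B : Formula σ) : QBKext σ Ex (A.imp (B.imp (A.and B)))
  | d1 (A B : Formula σ) : QBKext σ Ex (A.imp (A.or B))
  | d2 (A B : Formula σ) : QBKext σ Ex (B.imp (A.or B))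
  | d3 (A B C : Formula σ) : QBKext σ Ex ((A.imp C).imp ((B.imp C).imp ((A.or B).imp C)))
  | n1 (A : Formula σ) : QBKext σ Ex (A.or (A.imp .bot))
  | n2 (A : Formula σ) : QBKext σ Ex (Formula.bot.imp A)
  | sn1 (A : Formula σ) : QBKext σ Ex (A.snot.snot.fiff A)
  | sn2 (A B : Formula σ) : QBKext σ Ex ((A.imp B).snot.fiff (A.and B.snot))
  | sn3 (A B : Formula σ) : QBKext σ Ex ((A.or B).snot.fiff (A.snot.and B.snot))
  | sn4 (A B : Formula σ) : QBKext σ Ex ((A.and B).snot.fiff (A.snot.or B.snot))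
  | sn5 : QBKext σ Ex Formula.bot.snot
  | k1 (A B : Formula σ) : QBKext σ Ex ((A.box.and B.box).imp (A.and B).box)
  | k2 (A : Formula σ) : QBKext σ Ex (A.imp A).box
  | m1 (A : Formula σ) : QBKext σ Ex (A.box.neg.fiff A.neg.dia)
  | m2 (A : Formula σ) : QBKext σ Ex (A.dia.neg.fiff A.neg.box)
  | m3 (A : Formula σ) : QBKext σ Ex (A.box.siff A.snot.dia.snot)
  | m4 (A : Formula σ) : QBKext σ Ex (A.dia.siff A.snot.box.snot)
  | q1 {x : ℕ} {t : Term σ} {A : Formula σ} :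
      FreeFor x t A → QBKext σ Ex ((Formula.all x A).imp (A.subst x t))
  | q2 {x : ℕ} {t : Term σ} {A : Formula σ} :
      FreeFor x t A → QBKext σ Ex ((A.subst x t).imp (Formula.ex x A))
  | q3 (x : ℕ) (A : Formula σ) : QBKext σ Ex ((Formula.all x A).snot.fiff (Formula.ex x A.snot))
  | q4 (x : ℕ) (A : Formula σ) : QBKext σ Ex ((Formula.ex x A).snot.fiff (Formula.all x A.snot))
  | mp {A B : Formula σ} : QBKext σ Ex (A.imp B) → QBKext σ Ex A → QBKext σ Ex B
  | mb {A B : Formula σ} : QBKext σ Ex (A.imp B) → QBKext σ Ex (A.box.imp B.box)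
  | md {A B : Formula σ} : QBKext σ Ex (A.imp B) → QBKext σ Ex (A.dia.imp B.dia)
  | br1 {A B : Formula σ} {x : ℕ} :
      QBKext σ Ex (A.imp B) → x ∉ A.fv → QBKext σ Ex (A.imp (Formula.all x B))
  | br2 {A B : Formula σ} {x : ℕ} :
      QBKext σ Ex (A.imp B) → x ∉ B.fv → QBKext σ Ex ((Formula.ex x A).imp B)

/-- The logic QBK. -/
def QBK (σ : Sig) : Formula σ → Prop := QBKext σ fun _ => False

/-- Extra scheme Φ ∨ ∼Φ. -/
def ExMidSNAx (σ : Sig) : Formula σ → Prop := fun φ => ∃ A : Formula σ, φ = A.or A.snot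

/-- Extra scheme ∼Φ → (Φ → Ψ). -/
def ExplSNAx (σ : Sig) : Formula σ → Prop := fun φ => ∃ A B : Formula σ, φ = A.snot.imp (A.imp B)

/-- The Barcan scheme ◇∃xΦ → ∃x◇Φ. -/
def BaAx (σ : Sig) : Formula σ → Prop :=
  fun φ => ∃ (x : ℕ) (A : Formula σ), φ = (Formula.ex x A).dia.imp (Formula.ex x A.dia)

/-- The Barcan scheme ∀x□Φ → □∀xΦ. -/
def BaBoxAx (σ : Sig) : Formula σ → Prop :=
  fun φ => ∃ (x : ℕ) (A : Formula σ), φ = (Formula.all x A.box).imp (Formula.all x A).box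

def QBKc (σ : Sig) : Formula σ → Prop := QBKext σ (ExMidSNAx σ)
def QB3K (σ : Sig) : Formula σ → Prop := QBKext σ (ExplSNAx σ)
def QBKsharp (σ : Sig) : Formula σ → Prop := QBKext σ (BaAx σ)
def QBKsharpBox (σ : Sig) : Formula σ → Prop := QBKext σ (BaBoxAx σ)

/-! Derivability from a theory: modus ponens and the Bernays rules applied to Γ ∪ L. -/

inductive Deriv {σ : Sig} (L : Formula σ → Prop) (Γ : Set (Formula σ)) : Formula σ → Prop where
  | hyp {φ} : φ ∈ Γ → Deriv L Γ φ
  | frm {φ} : L φ → Deriv L Γ φ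
  | mp {φ ψ} : Deriv L Γ (φ.imp ψ) → Deriv L Γ φ → Deriv L Γ ψ
  | br1 {φ ψ : Formula σ} {x : ℕ} :
      Deriv L Γ (φ.imp ψ) → x ∉ φ.fv → Deriv L Γ (φ.imp (Formula.all x ψ))
  | br2 {φ ψ : Formula σ} {x : ℕ} :
      Deriv L Γ (φ.imp ψ) → x ∉ ψ.fv → Deriv L Γ ((Formula.ex x φ).imp ψ)

/-- Finite disjunction of a list of formulas; the empty disjunction is ⊥. -/
def disjList {σ : Sig} : List (Formula σ) → Formula σ
  | [] => .bot
  | [φ] => φ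
  | φ :: l => φ.or (disjList l)

/-- Γ ⊢ Δ : some finite disjunction of members of Δ is derivable from Γ ∪ L. -/
def DerivSet {σ : Sig} (L : Formula σ → Prop) (Γ Δ : Set (Formula σ)) : Prop :=
  ∃ l : List (Formula σ), (∀ φ ∈ l, φ ∈ Δ) ∧ Deriv L Γ (disjList l)

/-! Possible-world semantics. -/

/-- σ enriched with a fresh constant for every element of `S`. -/
@[reducible] def sigExt (σ : Sig) (S : Type) : Sig := ⟨σ.Pred, σ.arity, σ.Const ⊕ S⟩

def Term.pl {σ : Sig} {S : Type} : Term σ → Term (sigExt σ S)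
  | .var x => .var x
  | .const c => .const (Sum.inl c)

/-- A σ-formula viewed as a formula of the enriched signature. -/
def Formula.pl {σ : Sig} {S : Type} : Formula σ → Formula (sigExt σ S)
  | .atom P ts => .atom P fun i => (ts i).pl
  | .bot => .bot
  | .imp A B => A.pl.imp B.pl
  | .and A B => A.pl.and B.pl
  | .or A B => A.pl.or B.pl
  | .snot A => A.pl.snot
  | .box A => A.pl.box
  | .dia A => A.pl.dia
  | .all x A => .all x A.pl
  | .ex x A => .ex x A.pl

/-- A possible-world structure for σ: a frame together with, at each world, a pair of
σ-structures sharing the domain `D w` (positive and negative interpretation of predicates,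
a common interpretation of constants). -/
structure Model (σ : Sig) where
  W : Type
  R : W → W → Prop
  U : Type
  D : W → Set U
  cI : W → σ.Const → U
  pPos : (w : W) → (P : σ.Pred) → (Fin (σ.arity P) → U) → Prop
  pNeg : (w : W) → (P : σ.Pred) → (Fin (σ.arity P) → U) → Prop

/-- The conditions turning a structure into a QBK_σ-model: nonempty set of worlds, nonempty
domains containing the constants, expanding domains and preserved constants along R. -/
def Model.IsQBK {σ : Sig} (M : Model σ) : Prop :=
  Nonempty M.W ∧ (∀ w, (M.D w).Nonempty) ∧ (∀ w c, M.cI w c ∈ M.D w) ∧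
    (∀ u v, M.R u v → M.D u ⊆ M.D v) ∧ (∀ u v, M.R u v → ∀ c, M.cI u c = M.cI v c)

/-- Value of a term with parameters from the domain, under an assignment `g`. -/
def Model.tval {σ : Sig} (M : Model σ) (w : M.W) (g : ℕ → M.U) : Term (sigExt σ M.U) → M.U
  | .var x => g x
  | .const (Sum.inl c) => M.cI w c
  | .const (Sum.inr a) => a

/-- Verification (`true`) and falsification (`false`) of formulas with parameters from the
domain, at a world, under an assignment. -/
def Model.force {σ : Sig} (M : Model σ) :
    Formula (sigExt σ M.U) → Bool → M.W → (ℕ → M.U) → Prop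
  | .atom P ts, true, w, g => M.pPos w P fun i => M.tval w g (ts i)
  | .atom P ts, false, w, g => M.pNeg w P fun i => M.tval w g (ts i)
  | .bot, true, _, _ => False
  | .bot, false, _, _ => True
  | .imp A B, true, w, g => M.force A true w g → M.force B true w g
  | .imp A B, false, w, g => M.force A true w g ∧ M.force B false w g
  | .and A B, true, w, g => M.force A true w g ∧ M.force B true w g
  | .and A B, false, w, g => M.force A false w g ∨ M.force B false w g
  | .or A B, true, w, g => M.force A true w g ∨ M.force B true w g
  | .or A B, false, w, g => M.force A false w g ∧ M.force B false w g
  | .snot A, b, w, g => M.force A (!b) w g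
  | .box A, true, w, g => ∀ v, M.R w v → M.force A true v g
  | .box A, false, w, g => ∃ v, M.R w v ∧ M.force A false v g
  | .dia A, true, w, g => ∃ v, M.R w v ∧ M.force A true v g
  | .dia A, false, w, g => ∀ v, M.R w v → M.force A false v g
  | .all x A, true, w, g => ∀ a ∈ M.D w, M.force A true w (Function.update g x a)
  | .all x A, false, w, g => ∃ a ∈ M.D w, M.force A false w (Function.update g x a)
  | .ex x A, true, w, g => ∃ a ∈ M.D w, M.force A true w (Function.update g x a)
  | .ex x A, false, w, g => ∀ a ∈ M.D w, M.force A false w (Function.update g x a)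

/-- Semantic consequence over the models in the class `C`. -/
def SemConsIn {σ : Sig} (C : Model σ → Prop) (Γ Δ : Set (Formula σ)) : Prop :=
  ∀ M : Model σ, C M → ∀ (w : M.W) (g : ℕ → M.U), (∀ x, g x ∈ M.D w) →
    (∀ φ ∈ Γ, M.force φ.pl true w g) → ∃ ψ ∈ Δ, M.force ψ.pl true w g

/-! Theories. -/

/-- A prime theory (with respect to a logic `L`). -/
def PrimeTheory {σ : Sig} (L : Formula σ → Prop) (Γ : Set (Formula σ)) : Prop :=
  (∀ φ ∈ Γ, Sentence φ) ∧ Γ ≠ {φ | Sentence φ} ∧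
    (∀ φ : Formula σ, Sentence φ → DerivSet L Γ {φ} → φ ∈ Γ) ∧
    (∀ A B : Formula σ, A.or B ∈ Γ → A ∈ Γ ∨ B ∈ Γ)

/-- A saturated theory: prime with the existential property. -/
def Saturated {σ : Sig} (L : Formula σ → Prop) (Γ : Set (Formula σ)) : Prop :=
  PrimeTheory L Γ ∧ ∀ (x : ℕ) (A : Formula σ),
    Formula.ex x A ∈ Γ → ∃ c : σ.Const, A.subst x (.const c) ∈ Γ

/-! Replacement of subformulas, negation-freeness, negative normal form. -/

open Classical in
/-- Simultaneous replacement of all occurrences of the subformula `Φ` by `Ψ`. -/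
noncomputable def Formula.replace {σ : Sig} (Φ Ψ : Formula σ) : Formula σ → Formula σ
  | .atom P ts => if Formula.atom P ts = Φ then Ψ else .atom P ts
  | .bot => if (Formula.bot : Formula σ) = Φ then Ψ else .bot
  | .imp A B => if A.imp B = Φ then Ψ else (replace Φ Ψ A).imp (replace Φ Ψ B)
  | .and A B => if A.and B = Φ then Ψ else (replace Φ Ψ A).and (replace Φ Ψ B)
  | .or A B => if A.or B = Φ then Ψ else (replace Φ Ψ A).or (replace Φ Ψ B)
  | .snot A => if A.snot = Φ then Ψ else (replace Φ Ψ A).snot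
  | .box A => if A.box = Φ then Ψ else (replace Φ Ψ A).box
  | .dia A => if A.dia = Φ then Ψ else (replace Φ Ψ A).dia
  | .all x A => if Formula.all x A = Φ then Ψ else .all x (replace Φ Ψ A)
  | .ex x A => if Formula.ex x A = Φ then Ψ else .ex x (replace Φ Ψ A)

/-- The formula does not contain the strong negation ∼. -/
def NegFree {σ : Sig} : Formula σ → Prop
  | .atom _ _ => True
  | .bot => True
  | .imp A B => NegFree A ∧ NegFree B
  | .and A B => NegFree A ∧ NegFree B
  | .or A B => NegFree A ∧ NegFree B
  | .snot _ => False
  | .box A => NegFree A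
  | .dia A => NegFree A
  | .all _ A => NegFree A
  | .ex _ A => NegFree A

/-- Negative normal form: ∼ occurs only immediately in front of atoms or ⊥. -/
def IsNNF {σ : Sig} : Formula σ → Prop
  | .snot (.atom _ _) => True
  | .snot .bot => True
  | .snot _ => False
  | .atom _ _ => True
  | .bot => True
  | .imp A B => IsNNF A ∧ IsNNF B
  | .and A B => IsNNF A ∧ IsNNF B
  | .or A B => IsNNF A ∧ IsNNF B
  | .box A => IsNNF A
  | .dia A => IsNNF A
  | .all _ A => IsNNF A
  | .ex _ A => IsNNF A
/-! Canonical models. -/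

def Term.mapC {σ : Sig} {S S' : Type} (h : σ.Const ⊕ S → σ.Const ⊕ S') :
    Term (sigExt σ S) → Term (sigExt σ S')
  | .var x => .var x
  | .const c => .const (h c)

/-- Renaming the enriched constants of a formula along `h`. -/
def Formula.mapC {σ : Sig} {S S' : Type} (h : σ.Const ⊕ S → σ.Const ⊕ S') :
    Formula (sigExt σ S) → Formula (sigExt σ S')
  | .atom P ts => .atom P fun i => (ts i).mapC h
  | .bot => .bot
  | .imp A B => (A.mapC h).imp (B.mapC h)
  | .and A B => (A.mapC h).and (B.mapC h)
  | .or A B => (A.mapC h).or (B.mapC h)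
  | .snot A => (A.mapC h).snot
  | .box A => (A.mapC h).box
  | .dia A => (A.mapC h).dia
  | .all x A => .all x (A.mapC h)
  | .ex x A => .ex x (A.mapC h)

/-- `S ⊆ S★` is admissible if its complement has the full cardinality of `S★`. -/
def Admissible {Sstar : Type} (A : Set Sstar) : Prop :=
  Cardinal.mk ↥(Aᶜ) = Cardinal.mk Sstar

/-- Worlds of the canonical model for QBK: saturated σ_S-theories for admissible S ⊆ S★. -/
structure CanonWorld (σ : Sig) (Sstar : Type) where
  A : Set Sstar
  adm : Admissible A
  th : Set (Formula (sigExt σ ↥A))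
  sat : Saturated (QBK (sigExt σ ↥A)) th

/-- The canonical model for QBK. -/
@[reducible] def canonQBK (σ : Sig) (Sstar : Type) : Model σ where
  W := CanonWorld σ Sstar
  R := fun u v =>
    (Formula.mapC (σ := σ) (Sum.map id Subtype.val) '' {φ | φ.box ∈ u.th}) ⊆
      Formula.mapC (σ := σ) (Sum.map id Subtype.val) '' v.th
  U := σ.Const ⊕ Sstar
  D := fun w => Set.range fun c : (sigExt σ ↥w.A).Const => (Sum.map id Subtype.val c : σ.Const ⊕ Sstar)
  cI := fun _ c => Sum.inl c
  pPos := fun w P args => ∃ cs : Fin (σ.arity P) → (sigExt σ ↥w.A).Const,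
    (∀ i, Sum.map id Subtype.val (cs i) = args i) ∧
      (Formula.atom P fun i => Term.const (cs i) : Formula (sigExt σ ↥w.A)) ∈ w.th
  pNeg := fun w P args => ∃ cs : Fin (σ.arity P) → (sigExt σ ↥w.A).Const,
    (∀ i, Sum.map id Subtype.val (cs i) = args i) ∧
      (Formula.atom P fun i => Term.const (cs i) : Formula (sigExt σ ↥w.A)).snot ∈ w.th

/-- A σ_S-sentence regarded as a sentence with parameters from the domain of the
canonical model (each constant is sent to itself, viewed as a parameter). -/
def toParQBK {σ : Sig} {Sstar : Type} {A : Set Sstar} :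
    Formula (sigExt σ ↥A) → Formula (sigExt σ (σ.Const ⊕ Sstar)) :=
  Formula.mapC fun c => Sum.inr (Sum.map id Subtype.val c)

/-- The canonical model for QBK♯ (constant domains): worlds are all saturated σ★-theories. -/
@[reducible] def canonSharp (σ : Sig) (Sstar : Type) : Model σ where
  W := {Γ : Set (Formula (sigExt σ Sstar)) // Saturated (QBKsharp (sigExt σ Sstar)) Γ}
  R := fun u v => {φ | φ.box ∈ u.val} ⊆ v.val
  U := σ.Const ⊕ Sstar
  D := fun _ => Set.univ
  cI := fun _ c => Sum.inl c
  pPos := fun w P args =>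
    (Formula.atom P fun i => Term.const (args i) : Formula (sigExt σ Sstar)) ∈ w.val
  pNeg := fun w P args =>
    (Formula.atom P fun i => Term.const (args i) : Formula (sigExt σ Sstar)).snot ∈ w.val

/-- A σ★-sentence regarded as a sentence with parameters from the (constant) domain of the
canonical model for QBK♯. -/
def toParSharp {σ : Sig} {Sstar : Type} :
    Formula (sigExt σ Sstar) → Formula (sigExt σ (σ.Const ⊕ Sstar)) :=
  Formula.mapC Sum.inr
namespace QLx
open Formula

variable {τ τ' : Sig}

/-- All variables of a term. -/
def tav : Term τ → Finset ℕ
  | .var x => {x}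
  | .const _ => ∅

/-- All variables (free and bound) of a formula. -/
def AV : Formula τ → Finset ℕ
  | .atom _ ts => Finset.univ.biUnion fun i => tav (ts i)
  | .bot => ∅
  | .imp A B => AV A ∪ AV B
  | .and A B => AV A ∪ AV B
  | .or A B => AV A ∪ AV B
  | .snot A => AV A
  | .box A => AV A
  | .dia A => AV A
  | .all x A => insert x (AV A)
  | .ex x A => insert x (AV A)

/-- Constants occurring in a term. -/
def tcs : Term τ → Set τ.Const
  | .var _ => ∅
  | .const c => {c}

/-- Constants occurring in a formula. -/
def cs : Formula τ → Set τ.Const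
  | .atom _ ts => ⋃ i, tcs (ts i)
  | .bot => ∅
  | .imp A B => cs A ∪ cs B
  | .and A B => cs A ∪ cs B
  | .or A B => cs A ∪ cs B
  | .snot A => cs A
  | .box A => cs A
  | .dia A => cs A
  | .all _ A => cs A
  | .ex _ A => cs A

/-- Replace every atom argument by the term `u`. -/
def att (u : Term τ) : Formula τ → Formula τ
  | .atom P _ => .atom P fun _ => u
  | .bot => .bot
  | .imp A B => (att u A).imp (att u B)
  | .and A B => (att u A).and (att u B)
  | .or A B => (att u A).or (att u B)
  | .snot A => (att u A).snot
  | .box A => (att u A).box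
  | .dia A => (att u A).dia
  | .all x A => .all x (att u A)
  | .ex x A => .ex x (att u A)

lemma tav_fv (t : Term τ) : t.fv ⊆ tav t := by
  cases t <;> simp [tav, Term.fv]

lemma fv_subset_AV (A : Formula τ) : A.fv ⊆ AV A := by
  induction A with
  | atom P ts =>
      simp only [Formula.fv, AV]
      intro a ha
      simp only [Finset.mem_biUnion] at ha ⊢
      obtain ⟨i, _, hi⟩ := ha
      exact ⟨i, Finset.mem_univ i, tav_fv _ hi⟩
  | bot => simp [Formula.fv, AV]
  | imp A B ihA ihB => exact Finset.union_subset_union ihA ihB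
  | and A B ihA ihB => exact Finset.union_subset_union ihA ihB
  | or A B ihA ihB => exact Finset.union_subset_union ihA ihB
  | snot A ih => exact ih
  | box A ih => exact ih
  | dia A ih => exact ih
  | all x A ih =>
      refine subset_trans (Finset.erase_subset _ _) (subset_trans ih ?_)
      simp [AV, Finset.subset_insert]
  | ex x A ih =>
      refine subset_trans (Finset.erase_subset _ _) (subset_trans ih ?_)
      simp [AV, Finset.subset_insert]

lemma fv_subst (x : ℕ) (t : Term τ) (A : Formula τ) :
    (A.subst x t).fv ⊆ A.fv.erase x ∪ t.fv := by
  induction A with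
  | atom P ts =>
      simp only [Formula.subst, Formula.fv]
      intro a ha
      simp only [Finset.mem_biUnion] at ha
      obtain ⟨i, _, hi⟩ := ha
      cases t with
      | var y =>
          simp only [Term.substT] at hi
          split at hi
          · rename_i hyx
            by_cases hax : a = x
            · exact Finset.mem_union_right _ (by simp [Term.fv, hax, hyx])
            · refine Finset.mem_union_left _ (Finset.mem_erase.2 ⟨hax, ?_⟩)
              exact Finset.mem_biUnion.2 ⟨i, Finset.mem_univ i, hi⟩
          · simp only [Term.fv, Finset.mem_singleton] at hi
            subst hi
            exact Finset.mem_union_right _ (by simp [Term.fv])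
      | const c => simp [Term.substT, Term.fv] at hi
  | bot => simp [Formula.subst, Formula.fv]
  | imp A B ihA ihB =>
      simp only [Formula.subst, Formula.fv, Finset.union_subset_iff]
      constructor
      · refine subset_trans ihA (Finset.union_subset_union ?_ subset_rfl)
        exact Finset.erase_subset_erase _ Finset.subset_union_left
      · refine subset_trans ihB (Finset.union_subset_union ?_ subset_rfl)
        exact Finset.erase_subset_erase _ Finset.subset_union_right
  | and A B ihA ihB =>
      simp only [Formula.subst, Formula.fv, Finset.union_subset_iff]
      constructor
      · refine subset_trans ihA (Finset.union_subset_union ?_ subset_rfl)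
        exact Finset.erase_subset_erase _ Finset.subset_union_left
      · refine subset_trans ihB (Finset.union_subset_union ?_ subset_rfl)
        exact Finset.erase_subset_erase _ Finset.subset_union_right
  | or A B ihA ihB =>
      simp only [Formula.subst, Formula.fv, Finset.union_subset_iff]
      constructor
      · refine subset_trans ihA (Finset.union_subset_union ?_ subset_rfl)
        exact Finset.erase_subset_erase _ Finset.subset_union_left
      · refine subset_trans ihB (Finset.union_subset_union ?_ subset_rfl)
        exact Finset.erase_subset_erase _ Finset.subset_union_right
  | snot A ih => exact ih
  | box A ih => exact ih
  | dia A ih => exact ih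
  | all y A ih =>
      simp only [Formula.subst]
      split
      · rename_i hyx
        subst hyx
        simp only [Formula.fv]
        intro a ha
        rw [Finset.mem_erase] at ha
        exact Finset.mem_union_left _ (Finset.mem_erase.2 ⟨ha.1, Finset.mem_erase.2 ha⟩)
      · rename_i hyx
        simp only [Formula.fv]
        intro a ha
        rw [Finset.mem_erase] at ha
        rcases Finset.mem_union.1 (ih ha.2) with h | h
        · rw [Finset.mem_erase] at h
          exact Finset.mem_union_left _
            (Finset.mem_erase.2 ⟨h.1, Finset.mem_erase.2 ⟨ha.1, h.2⟩⟩)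
        · exact Finset.mem_union_right _ h
  | ex y A ih =>
      simp only [Formula.subst]
      split
      · rename_i hyx
        subst hyx
        simp only [Formula.fv]
        intro a ha
        rw [Finset.mem_erase] at ha
        exact Finset.mem_union_left _ (Finset.mem_erase.2 ⟨ha.1, Finset.mem_erase.2 ha⟩)
      · rename_i hyx
        simp only [Formula.fv]
        intro a ha
        rw [Finset.mem_erase] at ha
        rcases Finset.mem_union.1 (ih ha.2) with h | h
        · rw [Finset.mem_erase] at h
          exact Finset.mem_union_left _
            (Finset.mem_erase.2 ⟨h.1, Finset.mem_erase.2 ⟨ha.1, h.2⟩⟩)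
        · exact Finset.mem_union_right _ h

end QLx
namespace QLx
open Formula

variable {τ τ' : Sig}

lemma cs_subst (x : ℕ) (t : Term τ) (A : Formula τ) :
    cs (A.subst x t) ⊆ cs A ∪ tcs t := by
  induction A with
  | atom P ts =>
      simp only [Formula.subst, cs]
      intro a ha
      simp only [Set.mem_iUnion] at ha
      obtain ⟨i, hi⟩ := ha
      cases t with
      | var y =>
          simp only [Term.substT] at hi
          split at hi
          · exact Set.mem_union_left _ (Set.mem_iUnion.2 ⟨i, hi⟩)
          · simp [tcs] at hi
      | const c =>
          simp only [Term.substT, tcs, Set.mem_singleton_iff] at hi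
          exact Set.mem_union_right _ (by simp [tcs, hi])
  | bot => simp [Formula.subst, cs]
  | imp A B ihA ihB =>
      simp only [Formula.subst, cs, Set.union_subset_iff]
      exact ⟨subset_trans ihA (Set.union_subset_union_left _ Set.subset_union_left),
        subset_trans ihB (Set.union_subset_union_left _ Set.subset_union_right)⟩
  | and A B ihA ihB =>
      simp only [Formula.subst, cs, Set.union_subset_iff]
      exact ⟨subset_trans ihA (Set.union_subset_union_left _ Set.subset_union_left),
        subset_trans ihB (Set.union_subset_union_left _ Set.subset_union_right)⟩
  | or A B ihA ihB =>
      simp only [Formula.subst, cs, Set.union_subset_iff]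
      exact ⟨subset_trans ihA (Set.union_subset_union_left _ Set.subset_union_left),
        subset_trans ihB (Set.union_subset_union_left _ Set.subset_union_right)⟩
  | snot A ih => exact ih
  | box A ih => exact ih
  | dia A ih => exact ih
  | all y A ih =>
      simp only [Formula.subst]
      split
      · exact fun a ha => Set.mem_union_left _ ha
      · exact ih
  | ex y A ih =>
      simp only [Formula.subst]
      split
      · exact fun a ha => Set.mem_union_left _ ha
      · exact ih

lemma subst_att {z : ℕ} {u : Term τ} {A : Formula τ} (hz : z ∉ AV A) (hu : z ∉ tav u) :
    A.subst z u = att u A := by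
  induction A with
  | atom P ts =>
      simp only [Formula.subst, att, Formula.atom.injEq, heq_eq_eq, true_and]
      funext i
      cases u with
      | var y =>
          have : y ≠ z := fun e => hu (by simp [tav, e])
          simp [Term.substT, this]
      | const c => simp [Term.substT]
  | bot => simp [Formula.subst, att]
  | imp A B ihA ihB =>
      simp only [AV, Finset.mem_union, not_or] at hz
      simp [Formula.subst, att, ihA hz.1, ihB hz.2]
  | and A B ihA ihB =>
      simp only [AV, Finset.mem_union, not_or] at hz
      simp [Formula.subst, att, ihA hz.1, ihB hz.2]
  | or A B ihA ihB =>
      simp only [AV, Finset.mem_union, not_or] at hz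
      simp [Formula.subst, att, ihA hz.1, ihB hz.2]
  | snot A ih => simp only [AV] at hz; simp [Formula.subst, att, ih hz]
  | box A ih => simp only [AV] at hz; simp [Formula.subst, att, ih hz]
  | dia A ih => simp only [AV] at hz; simp [Formula.subst, att, ih hz]
  | all y A ih =>
      simp only [AV, Finset.mem_insert, not_or] at hz
      simp only [Formula.subst, att]
      rw [if_neg (fun e : y = z => hz.1 e.symm), ih hz.2]
  | ex y A ih =>
      simp only [AV, Finset.mem_insert, not_or] at hz
      simp only [Formula.subst, att]
      rw [if_neg (fun e : y = z => hz.1 e.symm), ih hz.2]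

lemma subst_subst_att {v x : ℕ} {A : Formula τ} (hv : v ∉ AV A) (hvx : v ≠ x) :
    (A.subst x (.var v)).subst v (.var x) = att (.var x) A := by
  induction A with
  | atom P ts =>
      simp only [Formula.subst, att, Formula.atom.injEq, heq_eq_eq, true_and]
      funext i
      simp [Term.substT, hvx, show ¬x = v from fun e => hvx e.symm]
  | bot => simp [Formula.subst, att]
  | imp A B ihA ihB =>
      simp only [AV, Finset.mem_union, not_or] at hv
      simp [Formula.subst, att, ihA hv.1, ihB hv.2]
  | and A B ihA ihB =>
      simp only [AV, Finset.mem_union, not_or] at hv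
      simp [Formula.subst, att, ihA hv.1, ihB hv.2]
  | or A B ihA ihB =>
      simp only [AV, Finset.mem_union, not_or] at hv
      simp [Formula.subst, att, ihA hv.1, ihB hv.2]
  | snot A ih => simp only [AV] at hv; simp [Formula.subst, att, ih hv]
  | box A ih => simp only [AV] at hv; simp [Formula.subst, att, ih hv]
  | dia A ih => simp only [AV] at hv; simp [Formula.subst, att, ih hv]
  | all y A ih =>
      simp only [AV, Finset.mem_insert, not_or] at hv
      by_cases hyx : y = x
      · subst hyx
        simp only [Formula.subst, if_pos rfl, ite_true, att]
        rw [if_neg (fun e : y = v => hv.1 e.symm)]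
        rw [subst_att hv.2 (fun hmem => hvx (by simpa [tav] using hmem))]
      · simp only [Formula.subst, if_neg hyx, att]
        rw [if_neg (fun e : y = v => hv.1 e.symm), ih hv.2]
  | ex y A ih =>
      simp only [AV, Finset.mem_insert, not_or] at hv
      by_cases hyx : y = x
      · subst hyx
        simp only [Formula.subst, if_pos rfl, ite_true, att]
        rw [if_neg (fun e : y = v => hv.1 e.symm)]
        rw [subst_att hv.2 (fun hmem => hvx (by simpa [tav] using hmem))]
      · simp only [Formula.subst, if_neg hyx, att]
        rw [if_neg (fun e : y = v => hv.1 e.symm), ih hv.2]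

lemma freefor_of_closed {x : ℕ} {t : Term τ} (ht : t.fv = ∅) (A : Formula τ) :
    FreeFor x t A := by
  induction A with
  | atom P ts => trivial
  | bot => trivial
  | imp A B ihA ihB => exact ⟨ihA, ihB⟩
  | and A B ihA ihB => exact ⟨ihA, ihB⟩
  | or A B ihA ihB => exact ⟨ihA, ihB⟩
  | snot A ih => exact ih
  | box A ih => exact ih
  | dia A ih => exact ih
  | all y A ih => exact Or.inr ⟨by simp [ht], ih⟩
  | ex y A ih => exact Or.inr ⟨by simp [ht], ih⟩

lemma freefor_subst_back {v x : ℕ} {A : Formula τ} (hv : v ∉ AV A) :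
    FreeFor v (.var x) (A.subst x (.var v)) := by
  induction A with
  | atom P ts => trivial
  | bot => trivial
  | imp A B ihA ihB =>
      simp only [AV, Finset.mem_union, not_or] at hv
      exact ⟨ihA hv.1, ihB hv.2⟩
  | and A B ihA ihB =>
      simp only [AV, Finset.mem_union, not_or] at hv
      exact ⟨ihA hv.1, ihB hv.2⟩
  | or A B ihA ihB =>
      simp only [AV, Finset.mem_union, not_or] at hv
      exact ⟨ihA hv.1, ihB hv.2⟩
  | snot A ih => exact ih hv
  | box A ih => exact ih hv
  | dia A ih => exact ih hv
  | all y A ih =>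
      simp only [AV, Finset.mem_insert, not_or] at hv
      simp only [Formula.subst]
      split
      · refine Or.inl fun hmem => ?_
        simp only [Formula.fv, Finset.mem_erase] at hmem
        exact hv.2 (fv_subset_AV A hmem.2)
      · rename_i hyx
        exact Or.inr ⟨by simp [Term.fv]; exact hyx, ih hv.2⟩
  | ex y A ih =>
      simp only [AV, Finset.mem_insert, not_or] at hv
      simp only [Formula.subst]
      split
      · refine Or.inl fun hmem => ?_
        simp only [Formula.fv, Finset.mem_erase] at hmem
        exact hv.2 (fv_subset_AV A hmem.2)
      · rename_i hyx
        exact Or.inr ⟨by simp [Term.fv]; exact hyx, ih hv.2⟩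

lemma fv_pl {σ : Sig} {S : Type} (A : Formula σ) : (Formula.pl (S := S) A).fv = A.fv := by
  induction A with
  | atom P ts =>
      simp only [Formula.pl, Formula.fv]
      congr 1
      funext i
      cases ts i <;> simp [Term.pl, Term.fv]
  | bot => rfl
  | imp A B ihA ihB => simp [Formula.pl, Formula.fv, ihA, ihB]
  | and A B ihA ihB => simp [Formula.pl, Formula.fv, ihA, ihB]
  | or A B ihA ihB => simp [Formula.pl, Formula.fv, ihA, ihB]
  | snot A ih => simp [Formula.pl, Formula.fv, ih]
  | box A ih => simp [Formula.pl, Formula.fv, ih]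
  | dia A ih => simp [Formula.pl, Formula.fv, ih]
  | all x A ih => simp [Formula.pl, Formula.fv, ih]
  | ex x A ih => simp [Formula.pl, Formula.fv, ih]

lemma cs_pl {σ : Sig} {S : Type} (A : Formula σ) (s : S) :
    Sum.inr s ∉ cs (Formula.pl (S := S) A) := by
  induction A with
  | atom P ts =>
      simp only [Formula.pl, cs, Set.mem_iUnion, not_exists]
      intro i
      cases ts i <;> simp [Term.pl, tcs]
  | bot => simp [Formula.pl, cs]
  | imp A B ihA ihB => simp only [Formula.pl, cs, Set.mem_union]; tauto
  | and A B ihA ihB => simp only [Formula.pl, cs, Set.mem_union]; tauto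
  | or A B ihA ihB => simp only [Formula.pl, cs, Set.mem_union]; tauto
  | snot A ih => exact ih
  | box A ih => exact ih
  | dia A ih => exact ih
  | all x A ih => exact ih
  | ex x A ih => exact ih

lemma fresh_notmem {s : Finset ℕ} {v : ℕ} (h : s.sup id < v) : v ∉ s := fun hv => by
  have := Finset.le_sup (f := id) hv
  simp only [id] at this
  omega

end QLx
namespace QLx
open Formula

/-- A signature with the constants replaced. -/
@[reducible] def csig (σ : Sig) (C : Type) : Sig := ⟨σ.Pred, σ.arity, C⟩

variable {σ₀ : Sig} {C C' : Type}

/-- Map a term along a constant assignment: constants go to constants or to the variable `v`. -/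
def tmap (h : C → C' ⊕ Unit) (v : ℕ) : Term (csig σ₀ C) → Term (csig σ₀ C')
  | .var y => .var y
  | .const c => match h c with
    | .inl c' => .const c'
    | .inr _ => .var v

/-- Map a formula along a constant assignment. -/
def cmap (h : C → C' ⊕ Unit) (v : ℕ) : Formula (csig σ₀ C) → Formula (csig σ₀ C')
  | .atom P ts => .atom P fun i => tmap h v (ts i)
  | .bot => .bot
  | .imp A B => (cmap h v A).imp (cmap h v B)
  | .and A B => (cmap h v A).and (cmap h v B)
  | .or A B => (cmap h v A).or (cmap h v B)
  | .snot A => (cmap h v A).snot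
  | .box A => (cmap h v A).box
  | .dia A => (cmap h v A).dia
  | .all x A => .all x (cmap h v A)
  | .ex x A => .ex x (cmap h v A)

variable {h : C → C' ⊕ Unit} {v : ℕ}

lemma tmap_fv (t : Term (csig σ₀ C)) : (tmap h v t).fv ⊆ t.fv ∪ {v} := by
  cases t with
  | var y => simp [tmap, Term.fv]
  | const c =>
      simp only [tmap]
      rcases h c with c' | u <;> simp [Term.fv]

lemma cmap_fv (A : Formula (csig σ₀ C)) : (cmap h v A).fv ⊆ A.fv ∪ {v} := by
  induction A with
  | atom P ts =>
      simp only [cmap, Formula.fv]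
      intro a ha
      simp only [Finset.mem_biUnion] at ha
      obtain ⟨i, _, hi⟩ := ha
      rcases Finset.mem_union.1 (tmap_fv (ts i) hi) with hh | hh
      · exact Finset.mem_union_left _ (Finset.mem_biUnion.2 ⟨i, Finset.mem_univ i, hh⟩)
      · exact Finset.mem_union_right _ hh
  | bot => simp [cmap, Formula.fv]
  | imp A B ihA ihB =>
      simp only [cmap, Formula.fv, Finset.union_subset_iff]
      constructor
      · exact subset_trans ihA (Finset.union_subset_union Finset.subset_union_left subset_rfl)
      · exact subset_trans ihB (Finset.union_subset_union Finset.subset_union_right subset_rfl)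
  | and A B ihA ihB =>
      simp only [cmap, Formula.fv, Finset.union_subset_iff]
      constructor
      · exact subset_trans ihA (Finset.union_subset_union Finset.subset_union_left subset_rfl)
      · exact subset_trans ihB (Finset.union_subset_union Finset.subset_union_right subset_rfl)
  | or A B ihA ihB =>
      simp only [cmap, Formula.fv, Finset.union_subset_iff]
      constructor
      · exact subset_trans ihA (Finset.union_subset_union Finset.subset_union_left subset_rfl)
      · exact subset_trans ihB (Finset.union_subset_union Finset.subset_union_right subset_rfl)
  | snot A ih => exact ih
  | box A ih => exact ih
  | dia A ih => exact ih
  | all x A ih =>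
      simp only [cmap, Formula.fv]
      intro a ha
      rw [Finset.mem_erase] at ha
      rcases Finset.mem_union.1 (ih ha.2) with hh | hh
      · exact Finset.mem_union_left _ (Finset.mem_erase.2 ⟨ha.1, hh⟩)
      · exact Finset.mem_union_right _ hh
  | ex x A ih =>
      simp only [cmap, Formula.fv]
      intro a ha
      rw [Finset.mem_erase] at ha
      rcases Finset.mem_union.1 (ih ha.2) with hh | hh
      · exact Finset.mem_union_left _ (Finset.mem_erase.2 ⟨ha.1, hh⟩)
      · exact Finset.mem_union_right _ hh

lemma cmap_notmem_fv {A : Formula (csig σ₀ C)} {x : ℕ} (hx : x ∉ A.fv) (hxv : x ≠ v) :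
    x ∉ (cmap h v A).fv := fun hh => by
  rcases Finset.mem_union.1 (cmap_fv A hh) with hc | hc
  · exact hx hc
  · exact hxv (by simpa using hc)

lemma cmap_subst {x : ℕ} (hvx : v ≠ x) (t : Term (csig σ₀ C)) (A : Formula (csig σ₀ C)) :
    cmap h v (A.subst x t) = (cmap h v A).subst x (tmap h v t) := by
  induction A with
  | atom P ts =>
      simp only [Formula.subst, cmap, Formula.atom.injEq, heq_eq_eq, true_and]
      funext i
      cases t with
      | var y => by_cases hyx : y = x <;> simp [tmap, Term.substT, hyx]
      | const c =>
          rcases hc : h c with c' | u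
          · simp [tmap, Term.substT, hc]
          · simp [tmap, Term.substT, hc, show ¬v = x from hvx]
  | bot => simp [Formula.subst, cmap]
  | imp A B ihA ihB => simp [Formula.subst, cmap, ihA, ihB]
  | and A B ihA ihB => simp [Formula.subst, cmap, ihA, ihB]
  | or A B ihA ihB => simp [Formula.subst, cmap, ihA, ihB]
  | snot A ih => simp [Formula.subst, cmap, ih]
  | box A ih => simp [Formula.subst, cmap, ih]
  | dia A ih => simp [Formula.subst, cmap, ih]
  | all y A ih =>
      simp only [Formula.subst, cmap]
      split <;> rename_i hyx
      · simp [cmap, Formula.subst, hyx]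
      · simp [cmap, Formula.subst, hyx, ih]
  | ex y A ih =>
      simp only [Formula.subst, cmap]
      split <;> rename_i hyx
      · simp [cmap, Formula.subst, hyx]
      · simp [cmap, Formula.subst, hyx, ih]

lemma freefor_cmap {x : ℕ} {t : Term (csig σ₀ C)} {A : Formula (csig σ₀ C)} (hf : FreeFor x t A)
    (hv : v ∉ AV A) (hxv : x ≠ v) : FreeFor x (tmap h v t) (cmap h v A) := by
  induction A with
  | atom P ts => trivial
  | bot => trivial
  | imp A B ihA ihB =>
      simp only [AV, Finset.mem_union, not_or] at hv
      exact ⟨ihA hf.1 hv.1, ihB hf.2 hv.2⟩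
  | and A B ihA ihB =>
      simp only [AV, Finset.mem_union, not_or] at hv
      exact ⟨ihA hf.1 hv.1, ihB hf.2 hv.2⟩
  | or A B ihA ihB =>
      simp only [AV, Finset.mem_union, not_or] at hv
      exact ⟨ihA hf.1 hv.1, ihB hf.2 hv.2⟩
  | snot A ih => exact ih hf hv
  | box A ih => exact ih hf hv
  | dia A ih => exact ih hf hv
  | all y A ih =>
      simp only [AV, Finset.mem_insert, not_or] at hv
      rcases hf with hf | hf
      · exact Or.inl (cmap_notmem_fv hf hxv)
      · refine Or.inr ⟨?_, ih hf.2 hv.2⟩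
        intro hy
        rcases Finset.mem_union.1 (tmap_fv t hy) with hc | hc
        · exact hf.1 hc
        · exact hv.1 (Eq.symm (by simpa using hc))
  | ex y A ih =>
      simp only [AV, Finset.mem_insert, not_or] at hv
      rcases hf with hf | hf
      · exact Or.inl (cmap_notmem_fv hf hxv)
      · refine Or.inr ⟨?_, ih hf.2 hv.2⟩
        intro hy
        rcases Finset.mem_union.1 (tmap_fv t hy) with hc | hc
        · exact hf.1 hc
        · exact hv.1 (Eq.symm (by simpa using hc))

lemma cmap_neg (A : Formula (csig σ₀ C)) : cmap h v A.neg = (cmap h v A).neg := rfl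
lemma cmap_fiff (A B : Formula (csig σ₀ C)) :
    cmap h v (A.fiff B) = (cmap h v A).fiff (cmap h v B) := rfl
lemma cmap_siff (A B : Formula (csig σ₀ C)) :
    cmap h v (A.siff B) = (cmap h v A).siff (cmap h v B) := rfl

/-- Theorems of QBK are preserved by constant renaming, for large enough fresh variables. -/
lemma qbk_cmap {φ : Formula (csig σ₀ C)} (H : QBK (csig σ₀ C) φ) (h : C → C' ⊕ Unit) :
    ∃ N, ∀ v ≥ N, QBK (csig σ₀ C') (cmap h v φ) := by
  induction H with
  | extra hex => exact absurd hex not_false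
  | i1 A B => exact ⟨0, fun v _ => QBKext.i1 _ _⟩
  | i2 A B C => exact ⟨0, fun v _ => QBKext.i2 _ _ _⟩
  | c1 A B => exact ⟨0, fun v _ => QBKext.c1 _ _⟩
  | c2 A B => exact ⟨0, fun v _ => QBKext.c2 _ _⟩
  | c3 A B => exact ⟨0, fun v _ => QBKext.c3 _ _⟩
  | d1 A B => exact ⟨0, fun v _ => QBKext.d1 _ _⟩
  | d2 A B => exact ⟨0, fun v _ => QBKext.d2 _ _⟩
  | d3 A B C => exact ⟨0, fun v _ => QBKext.d3 _ _ _⟩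
  | n1 A => exact ⟨0, fun v _ => QBKext.n1 _⟩
  | n2 A => exact ⟨0, fun v _ => QBKext.n2 _⟩
  | sn1 A => exact ⟨0, fun v _ => QBKext.sn1 _⟩
  | sn2 A B => exact ⟨0, fun v _ => QBKext.sn2 _ _⟩
  | sn3 A B => exact ⟨0, fun v _ => QBKext.sn3 _ _⟩
  | sn4 A B => exact ⟨0, fun v _ => QBKext.sn4 _ _⟩
  | sn5 => exact ⟨0, fun v _ => QBKext.sn5⟩
  | k1 A B => exact ⟨0, fun v _ => QBKext.k1 _ _⟩
  | k2 A => exact ⟨0, fun v _ => QBKext.k2 _⟩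
  | m1 A => exact ⟨0, fun v _ => QBKext.m1 _⟩
  | m2 A => exact ⟨0, fun v _ => QBKext.m2 _⟩
  | m3 A => exact ⟨0, fun v _ => QBKext.m3 _⟩
  | m4 A => exact ⟨0, fun v _ => QBKext.m4 _⟩
  | q1 hf =>
      rename_i x t A
      refine ⟨(insert x (AV A)).sup id + 1, fun v hv => ?_⟩
      have hnm := fresh_notmem (s := insert x (AV A)) (v := v) (by omega)
      simp only [Finset.mem_insert, not_or] at hnm
      have e : cmap h v ((Formula.all x A).imp (A.subst x t))
          = (Formula.all x (cmap h v A)).imp ((cmap h v A).subst x (tmap h v t)) := by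
        simp [cmap, cmap_subst hnm.1]
      rw [e]
      exact QBKext.q1 (freefor_cmap hf hnm.2 (fun e => hnm.1 e.symm))
  | q2 hf =>
      rename_i x t A
      refine ⟨(insert x (AV A)).sup id + 1, fun v hv => ?_⟩
      have hnm := fresh_notmem (s := insert x (AV A)) (v := v) (by omega)
      simp only [Finset.mem_insert, not_or] at hnm
      have e : cmap h v ((A.subst x t).imp (Formula.ex x A))
          = ((cmap h v A).subst x (tmap h v t)).imp (Formula.ex x (cmap h v A)) := by
        simp [cmap, cmap_subst hnm.1]
      rw [e]
      exact QBKext.q2 (freefor_cmap hf hnm.2 (fun e => hnm.1 e.symm))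
  | q3 x A => exact ⟨0, fun v _ => QBKext.q3 _ _⟩
  | q4 x A => exact ⟨0, fun v _ => QBKext.q4 _ _⟩
  | mp _ _ ih1 ih2 =>
      obtain ⟨N1, h1⟩ := ih1
      obtain ⟨N2, h2⟩ := ih2
      exact ⟨max N1 N2, fun v hv =>
        QBKext.mp (h1 v (le_trans (le_max_left _ _) hv)) (h2 v (le_trans (le_max_right _ _) hv))⟩
  | mb _ ih =>
      obtain ⟨N, h1⟩ := ih
      exact ⟨N, fun v hv => QBKext.mb (h1 v hv)⟩
  | md _ ih =>
      obtain ⟨N, h1⟩ := ih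
      exact ⟨N, fun v hv => QBKext.md (h1 v hv)⟩
  | br1 _ hx ih =>
      rename_i A B x hd
      obtain ⟨N, h1⟩ := ih
      refine ⟨max N (x + 1), fun v hv => ?_⟩
      refine QBKext.br1 (h1 v (le_trans (le_max_left _ _) hv)) ?_
      exact cmap_notmem_fv hx (by omega)
  | br2 _ hx ih =>
      rename_i A B x hd
      obtain ⟨N, h1⟩ := ih
      refine ⟨max N (x + 1), fun v hv => ?_⟩
      refine QBKext.br2 (h1 v (le_trans (le_max_left _ _) hv)) ?_
      exact cmap_notmem_fv hx (by omega)

/-- Derivations from hypotheses are preserved by constant renaming. -/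
lemma deriv_cmap {Γ : Set (Formula (csig σ₀ C))} {φ : Formula (csig σ₀ C)}
    (H : Deriv (QBK (csig σ₀ C)) Γ φ) (h : C → C' ⊕ Unit) :
    ∃ N, ∀ v ≥ N, Deriv (QBK (csig σ₀ C')) (cmap h v '' Γ) (cmap h v φ) := by
  induction H with
  | hyp hm => exact ⟨0, fun v _ => Deriv.hyp ⟨_, hm, rfl⟩⟩
  | frm hf =>
      obtain ⟨N, h1⟩ := qbk_cmap hf h
      exact ⟨N, fun v hv => Deriv.frm (h1 v hv)⟩
  | mp _ _ ih1 ih2 =>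
      obtain ⟨N1, h1⟩ := ih1
      obtain ⟨N2, h2⟩ := ih2
      exact ⟨max N1 N2, fun v hv =>
        Deriv.mp (h1 v (le_trans (le_max_left _ _) hv)) (h2 v (le_trans (le_max_right _ _) hv))⟩
  | br1 _ hx ih =>
      rename_i A B x hd
      obtain ⟨N, h1⟩ := ih
      refine ⟨max N (x + 1), fun v hv => ?_⟩
      exact Deriv.br1 (h1 v (le_trans (le_max_left _ _) hv)) (cmap_notmem_fv hx (by omega))
  | br2 _ hx ih =>
      rename_i A B x hd
      obtain ⟨N, h1⟩ := ih
      refine ⟨max N (x + 1), fun v hv => ?_⟩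
      exact Deriv.br2 (h1 v (le_trans (le_max_left _ _) hv)) (cmap_notmem_fv hx (by omega))

/-- The constant assignment sending every added constant to the unit marker. -/
def hback (σ : Sig) (S : Type) : (sigExt σ S).Const → σ.Const ⊕ Unit :=
  Sum.elim Sum.inl (fun _ => Sum.inr ())

lemma cmap_pl {σ : Sig} {S : Type} (v : ℕ) (A : Formula σ) :
    cmap (hback σ S) v (Formula.pl A) = A := by
  induction A with
  | atom P ts =>
      simp only [Formula.pl, cmap, Formula.atom.injEq, heq_eq_eq, true_and]
      funext i
      cases ts i <;> simp [Term.pl, tmap, hback]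
  | bot => rfl
  | imp A B ihA ihB => simp [Formula.pl, cmap, ihA, ihB]
  | and A B ihA ihB => simp [Formula.pl, cmap, ihA, ihB]
  | or A B ihA ihB => simp [Formula.pl, cmap, ihA, ihB]
  | snot A ih => simp [Formula.pl, cmap, ih]
  | box A ih => simp [Formula.pl, cmap, ih]
  | dia A ih => simp [Formula.pl, cmap, ih]
  | all x A ih => simp [Formula.pl, cmap, ih]
  | ex x A ih => simp [Formula.pl, cmap, ih]

open Classical in
/-- The constant assignment deleting the single constant `e`. -/
noncomputable def hdel (e : C) : C → C ⊕ Unit :=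
  fun c => if c = e then Sum.inr () else Sum.inl c

lemma tmap_hdel_of_ne {e : C} {t : Term (csig σ₀ C)} (ht : e ∉ tcs t) :
    tmap (hdel e) v t = t := by
  cases t with
  | var y => rfl
  | const c =>
      have : c ≠ e := by simpa [tcs] using fun hc : c = e => ht (by simp [tcs, hc])
      simp [tmap, hdel, this]

lemma tmap_hdel_self (e : C) : tmap (σ₀ := σ₀) (hdel e) v (.const e) = .var v := by
  simp [tmap, hdel]

lemma cmap_hdel_of_notmem {e : C} {A : Formula (csig σ₀ C)} (hA : e ∉ cs A) :
    cmap (hdel e) v A = A := by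
  induction A with
  | atom P ts =>
      simp only [cmap, Formula.atom.injEq, heq_eq_eq, true_and]
      funext i
      refine tmap_hdel_of_ne fun hc => hA ?_
      simp only [cs, Set.mem_iUnion]
      exact ⟨i, hc⟩
  | bot => rfl
  | imp A B ihA ihB =>
      simp only [cs, Set.mem_union, not_or] at hA
      simp [cmap, ihA hA.1, ihB hA.2]
  | and A B ihA ihB =>
      simp only [cs, Set.mem_union, not_or] at hA
      simp [cmap, ihA hA.1, ihB hA.2]
  | or A B ihA ihB =>
      simp only [cs, Set.mem_union, not_or] at hA
      simp [cmap, ihA hA.1, ihB hA.2]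
  | snot A ih => simp only [cs] at hA; simp [cmap, ih hA]
  | box A ih => simp only [cs] at hA; simp [cmap, ih hA]
  | dia A ih => simp only [cs] at hA; simp [cmap, ih hA]
  | all x A ih => simp only [cs] at hA; simp [cmap, ih hA]
  | ex x A ih => simp only [cs] at hA; simp [cmap, ih hA]

lemma image_eq_of_fixed {α : Type*} {f : α → α} {T : Set α} (hf : ∀ a ∈ T, f a = a) :
    f '' T = T := by
  ext a
  constructor
  · rintro ⟨b, hb, rfl⟩
    rw [hf b hb]; exact hb
  · intro ha
    exact ⟨a, ha, hf a ha⟩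

end QLx
namespace QLx
open Formula

variable {τ : Sig}

/-! QBKext-level propositional lemmas. -/

section K
variable {Ex : Formula τ → Prop}

lemma K.id (A : Formula τ) : QBKext τ Ex (A.imp A) :=
  QBKext.mp (QBKext.mp (QBKext.i2 A (A.imp A) A) (QBKext.i1 A (A.imp A))) (QBKext.i1 A A)

lemma K.comp {A B C : Formula τ} (h1 : QBKext τ Ex (A.imp B)) (h2 : QBKext τ Ex (B.imp C)) :
    QBKext τ Ex (A.imp C) :=
  QBKext.mp (QBKext.mp (QBKext.i2 A B C) (QBKext.mp (QBKext.i1 (B.imp C) A) h2)) h1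

lemma K.swap {A B C : Formula τ} (h : QBKext τ Ex (A.imp (B.imp C))) :
    QBKext τ Ex (B.imp (A.imp C)) :=
  K.comp (QBKext.i1 B A) (QBKext.mp (QBKext.i2 A B C) h)

end K

/-! Deriv-level lemmas, for the logic `QBK τ`. -/

abbrev D (Γ : Set (Formula τ)) (φ : Formula τ) : Prop := Deriv (QBK τ) Γ φ

lemma D.frmQ {Γ : Set (Formula τ)} {φ : Formula τ} (h : QBKext τ (fun _ => False) φ) :
    D Γ φ := Deriv.frm h

lemma D.id {Γ : Set (Formula τ)} (A : Formula τ) : D Γ (A.imp A) := D.frmQ (K.id A)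

lemma D.comp {Γ : Set (Formula τ)} {A B C : Formula τ} (h1 : D Γ (A.imp B))
    (h2 : D Γ (B.imp C)) : D Γ (A.imp C) :=
  Deriv.mp (Deriv.mp (D.frmQ (QBKext.i2 A B C))
    (Deriv.mp (D.frmQ (QBKext.i1 (B.imp C) A)) h2)) h1

lemma D.swap {Γ : Set (Formula τ)} {A B C : Formula τ} (h : D Γ (A.imp (B.imp C))) :
    D Γ (B.imp (A.imp C)) :=
  D.comp (D.frmQ (QBKext.i1 B A)) (Deriv.mp (D.frmQ (QBKext.i2 A B C)) h)

lemma D.wk {Γ : Set (Formula τ)} {A : Formula τ} (B : Formula τ) (h : D Γ A) :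
    D Γ (B.imp A) := Deriv.mp (D.frmQ (QBKext.i1 A B)) h

lemma D.s {Γ : Set (Formula τ)} {A B C : Formula τ} (h1 : D Γ (A.imp (B.imp C)))
    (h2 : D Γ (A.imp B)) : D Γ (A.imp C) :=
  Deriv.mp (Deriv.mp (D.frmQ (QBKext.i2 A B C)) h1) h2

lemma D.orElim {Γ : Set (Formula τ)} {A B C : Formula τ} (h1 : D Γ (A.imp C))
    (h2 : D Γ (B.imp C)) : D Γ ((A.or B).imp C) :=
  Deriv.mp (Deriv.mp (D.frmQ (QBKext.d3 A B C)) h1) h2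

lemma D.exfalso {Γ : Set (Formula τ)} (A : Formula τ) : D Γ (Formula.bot.imp A) :=
  D.frmQ (QBKext.n2 A)

lemma D.cases {Γ : Set (Formula τ)} {A C : Formula τ} (h1 : D Γ (A.imp C))
    (h2 : D Γ ((A.imp .bot).imp C)) : D Γ C :=
  Deriv.mp (D.orElim h1 h2) (D.frmQ (QBKext.n1 A))

/-- Weakening of the hypothesis set. -/
lemma deriv_mono {L : Formula τ → Prop} {Γ Γ' : Set (Formula τ)} {φ : Formula τ}
    (h : Deriv L Γ φ) (hsub : Γ ⊆ Γ') : Deriv L Γ' φ := by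
  induction h with
  | hyp hm => exact Deriv.hyp (hsub hm)
  | frm hf => exact Deriv.frm hf
  | mp _ _ ih1 ih2 => exact Deriv.mp ih1 ih2
  | br1 _ hx ih => exact Deriv.br1 ih hx
  | br2 _ hx ih => exact Deriv.br2 ih hx

/-- Compactness: a derivation only uses finitely many hypotheses. -/
lemma deriv_finite {L : Formula τ → Prop} {Γ : Set (Formula τ)} {φ : Formula τ}
    (h : Deriv L Γ φ) : ∃ Γ₀ ⊆ Γ, Γ₀.Finite ∧ Deriv L Γ₀ φ := by
  induction h with
  | hyp hm =>
      rename_i ψ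
      exact ⟨{ψ}, by simpa using hm, Set.finite_singleton ψ, Deriv.hyp rfl⟩
  | frm hf => exact ⟨∅, Set.empty_subset _, Set.finite_empty, Deriv.frm hf⟩
  | mp _ _ ih1 ih2 =>
      obtain ⟨Γ₁, hs1, hf1, hd1⟩ := ih1
      obtain ⟨Γ₂, hs2, hf2, hd2⟩ := ih2
      exact ⟨Γ₁ ∪ Γ₂, Set.union_subset hs1 hs2, hf1.union hf2,
        Deriv.mp (deriv_mono hd1 Set.subset_union_left) (deriv_mono hd2 Set.subset_union_right)⟩
  | br1 _ hx ih =>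
      obtain ⟨Γ₀, hs, hf, hd⟩ := ih
      exact ⟨Γ₀, hs, hf, Deriv.br1 hd hx⟩
  | br2 _ hx ih =>
      obtain ⟨Γ₀, hs, hf, hd⟩ := ih
      exact ⟨Γ₀, hs, hf, Deriv.br2 hd hx⟩

/-- The deduction theorem, for a closed hypothesis. -/
lemma deduction {Γ : Set (Formula τ)} {φ ψ : Formula τ} (hφ : φ.fv = ∅)
    (h : Deriv (QBK τ) (insert φ Γ) ψ) : Deriv (QBK τ) Γ (φ.imp ψ) := by
  induction h with
  | hyp hm =>
      rcases Set.mem_insert_iff.1 hm with rfl | hm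
      · exact D.id _
      · exact D.wk _ (Deriv.hyp hm)
  | frm hf => exact D.wk _ (Deriv.frm hf)
  | mp _ _ ih1 ih2 => exact D.s ih1 ih2
  | br1 _ hx ih =>
      rename_i χ ω x hd
      -- ih : D Γ (φ.imp (χ.imp ω)), want D Γ (φ.imp (χ.imp (all x ω)))
      have un : D Γ ((φ.and χ).imp ω) :=
        D.s (D.comp (D.frmQ (QBKext.c1 φ χ)) ih) (D.frmQ (QBKext.c2 φ χ))
      have hx2 : x ∉ (φ.and χ).fv := by
        simp only [Formula.fv, Finset.mem_union, hφ]
        simpa using hx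
      have b : D Γ ((φ.and χ).imp (Formula.all x ω)) := Deriv.br1 un hx2
      have e2 : D Γ ((χ.imp (φ.and χ)).imp (χ.imp (Formula.all x ω))) :=
        Deriv.mp (D.frmQ (QBKext.i2 χ (φ.and χ) (Formula.all x ω)))
          (D.wk _ b)
      exact D.comp (D.frmQ (QBKext.c3 φ χ)) e2
  | br2 _ hx ih =>
      rename_i χ ω x hd
      have sw : D Γ (χ.imp (φ.imp ω)) := D.swap ih
      have hx2 : x ∉ (φ.imp ω).fv := by
        simp only [Formula.fv, Finset.mem_union, hφ]
        simpa using hx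
      exact D.swap (Deriv.br2 sw hx2)

/-! disjList lemmas. -/

lemma D.or_cons_imp {Γ : Set (Formula τ)} (φ : Formula τ) (l : List (Formula τ)) :
    D Γ ((φ.or (disjList l)).imp (disjList (φ :: l))) := by
  cases l with
  | nil => exact D.orElim (D.id φ) (D.exfalso φ)
  | cons a l => exact D.id _

lemma D.cons_imp_or {Γ : Set (Formula τ)} (φ : Formula τ) (l : List (Formula τ)) :
    D Γ ((disjList (φ :: l)).imp (φ.or (disjList l))) := by
  cases l with
  | nil => exact D.frmQ (QBKext.d1 φ .bot)
  | cons a l => exact D.id _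

lemma D.orMapRight {Γ : Set (Formula τ)} {A B C : Formula τ} (h : D Γ (B.imp C)) :
    D Γ ((A.or B).imp (A.or C)) :=
  D.orElim (D.frmQ (QBKext.d1 A C)) (D.comp h (D.frmQ (QBKext.d2 A C)))

lemma D.disj_append_left {Γ : Set (Formula τ)} (l₁ l₂ : List (Formula τ)) :
    D Γ ((disjList l₁).imp (disjList (l₁ ++ l₂))) := by
  induction l₁ with
  | nil => exact D.exfalso _
  | cons a l ih =>
      refine D.comp (D.cons_imp_or a l) (D.comp (D.orMapRight ih) ?_)
      exact D.or_cons_imp a (l ++ l₂)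

lemma D.disj_append_right {Γ : Set (Formula τ)} (l₁ l₂ : List (Formula τ)) :
    D Γ ((disjList l₂).imp (disjList (l₁ ++ l₂))) := by
  induction l₁ with
  | nil => exact D.id _
  | cons a l ih =>
      refine D.comp ih (D.comp (D.frmQ (QBKext.d2 a (disjList (l ++ l₂)))) ?_)
      exact D.or_cons_imp a (l ++ l₂)

lemma D.disj_of_or {Γ : Set (Formula τ)} {l₁ l₂ : List (Formula τ)}
    (h : D Γ ((disjList l₁).or (disjList l₂))) : D Γ (disjList (l₁ ++ l₂)) :=
  Deriv.mp (D.orElim (D.disj_append_left l₁ l₂) (D.disj_append_right l₁ l₂)) h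

lemma D.disj_all_eq {Γ : Set (Formula τ)} {φ : Formula τ} (l : List (Formula τ))
    (hl : ∀ ψ ∈ l, ψ = φ) : D Γ ((disjList l).imp φ) := by
  induction l with
  | nil => exact D.exfalso φ
  | cons a l ih =>
      have ha : a = φ := hl a (by simp)
      subst ha
      refine D.comp (D.cons_imp_or a l) (D.orElim (D.id a) (ih fun ψ hψ => hl ψ (by simp [hψ])))

/-! DerivSet lemmas. -/

lemma DerivSet.mono {L : Formula τ → Prop} {Γ Γ' Δ : Set (Formula τ)}
    (h : DerivSet L Γ Δ) (hsub : Γ ⊆ Γ') : DerivSet L Γ' Δ := by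
  obtain ⟨l, hl, hd⟩ := h
  exact ⟨l, hl, deriv_mono hd hsub⟩

end QLx
namespace QLx
open Formula

variable {τ : Sig}

/-- Key glue: a closed existential implies the existential over a fresh variable of the
substituted body. -/
lemma glue {Γ : Set (Formula τ)} {A : Formula τ} {x v : ℕ} (hv : v ∉ AV A) (hvx : v ≠ x)
    (hsent : (Formula.ex x A).fv = ∅) :
    D Γ ((Formula.ex x A).imp (Formula.ex v (A.subst x (.var v)))) := by
  set E := Formula.ex x A with hE
  set B := A.subst x (.var v) with hB
  have gl1 : D Γ (E.imp (Formula.all v E)) :=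
    Deriv.br1 (D.id E) (by rw [hE, hsent]; exact Finset.notMem_empty v)
  have ffE : FreeFor v (.var x) E := by
    refine Or.inl ?_
    rw [hsent]
    exact Finset.notMem_empty v
  have eq1 : E.subst v (.var x) = Formula.ex x (att (.var x) A) := by
    rw [hE]
    show Formula.subst v (.var x) (Formula.ex x A) = _
    simp only [Formula.subst, if_neg (show x ≠ v from fun e => hvx e.symm)]
    rw [subst_att hv (by simp [tav]; exact fun e => hvx e)]
  have gl2 : D Γ ((Formula.all v E).imp (Formula.ex x (att (.var x) A))) := by
    have := D.frmQ (Γ := Γ) (QBKext.q1 ffE)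
    rwa [eq1] at this
  have gl3 : D Γ (E.imp (Formula.ex x (att (.var x) A))) := D.comp gl1 gl2
  have eqB : B.subst v (.var x) = att (.var x) A := subst_subst_att hv hvx
  have gl4 : QBKext τ (fun _ => False) ((att (.var x) A).imp (Formula.ex v B)) := by
    have := QBKext.q2 (σ := τ) (Ex := fun _ => False) (freefor_subst_back (x := x) hv)
    rwa [eqB] at this
  have hxfv : x ∉ (Formula.ex v B).fv := by
    intro hmem
    simp only [Formula.fv, Finset.mem_erase] at hmem
    rcases Finset.mem_union.1 (fv_subst x (.var v) A hmem.2) with hc | hc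
    · have : (Formula.ex x A).fv = A.fv.erase x := rfl
      rw [hsent] at this
      rw [← this] at hc
      exact absurd hc (Finset.notMem_empty x)
    · exact hmem.1 (by simpa [Term.fv] using hc)
  have gl5 : QBKext τ (fun _ => False) ((Formula.ex x (att (.var x) A)).imp (Formula.ex v B)) :=
    QBKext.br2 gl4 hxfv
  exact D.comp gl3 (D.frmQ gl5)

/-- Witness elimination: from `(∃xA → A(x/v)) → dsj` with `v` fresh, conclude `dsj`. -/
lemma dance {Γ : Set (Formula τ)} {A dsj : Formula τ} {x v : ℕ} (hv : v ∉ AV A) (hvx : v ≠ x)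
    (hvd : v ∉ dsj.fv) (hsent : (Formula.ex x A).fv = ∅)
    (h : D Γ (((Formula.ex x A).imp (A.subst x (.var v))).imp dsj)) : D Γ dsj := by
  set E := Formula.ex x A with hE
  set B := A.subst x (.var v) with hB
  have s2 : D Γ (B.imp dsj) := D.comp (D.frmQ (QBKext.i1 B E)) h
  have s3 : D Γ ((Formula.ex v B).imp dsj) := Deriv.br2 s2 hvd
  have s6 : D Γ (E.imp dsj) := D.comp (glue hv hvx hsent) s3
  have s7 : D Γ ((E.imp .bot).imp (E.imp B)) :=
    Deriv.mp (D.frmQ (QBKext.i2 E .bot B)) (D.wk E (D.exfalso B))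
  have s8 : D Γ ((E.imp .bot).imp dsj) := D.comp s7 h
  exact D.cases s6 s8

/-! Constant levels. -/

variable {g : τ.Const → ℕ}

def tlev (g : τ.Const → ℕ) : Term τ → Finset ℕ
  | .var _ => ∅
  | .const c => {g c}

def flev (g : τ.Const → ℕ) : Formula τ → Finset ℕ
  | .atom _ ts => Finset.univ.biUnion fun i => tlev g (ts i)
  | .bot => ∅
  | .imp A B => flev g A ∪ flev g B
  | .and A B => flev g A ∪ flev g B
  | .or A B => flev g A ∪ flev g B
  | .snot A => flev g A
  | .box A => flev g A
  | .dia A => flev g A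
  | .all _ A => flev g A
  | .ex _ A => flev g A

/-- Maximal level of a constant occurring in a formula. -/
def mlev (g : τ.Const → ℕ) (A : Formula τ) : ℕ := (flev g A).sup id

lemma mem_flev (c : τ.Const) (A : Formula τ) : c ∈ cs A → g c ∈ flev g A := by
  induction A with
  | atom P ts =>
      intro hc
      simp only [cs, Set.mem_iUnion] at hc
      obtain ⟨i, hi⟩ := hc
      simp only [flev, Finset.mem_biUnion]
      refine ⟨i, Finset.mem_univ i, ?_⟩
      cases ht : ts i with
      | var y => rw [ht] at hi; simp [tcs] at hi
      | const c' => rw [ht] at hi; simp only [tcs, Set.mem_singleton_iff] at hi; simp [tlev, hi]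
  | bot => intro hc; simp [cs] at hc
  | imp A B ihA ihB =>
      intro hc
      simp only [cs, Set.mem_union] at hc
      rcases hc with h | h
      · exact Finset.mem_union_left _ (ihA h)
      · exact Finset.mem_union_right _ (ihB h)
  | and A B ihA ihB =>
      intro hc
      simp only [cs, Set.mem_union] at hc
      rcases hc with h | h
      · exact Finset.mem_union_left _ (ihA h)
      · exact Finset.mem_union_right _ (ihB h)
  | or A B ihA ihB =>
      intro hc
      simp only [cs, Set.mem_union] at hc
      rcases hc with h | h
      · exact Finset.mem_union_left _ (ihA h)
      · exact Finset.mem_union_right _ (ihB h)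
  | snot A ih => exact ih
  | box A ih => exact ih
  | dia A ih => exact ih
  | all y A ih => exact ih
  | ex y A ih => exact ih

lemma le_mlev {c : τ.Const} {A : Formula τ} (hc : c ∈ cs A) : g c ≤ mlev g A :=
  Finset.le_sup (f := id) (mem_flev c A hc)

end QLx
namespace QLx
open Formula

variable {τ : Sig}

/-! Encoding formulas as lists. -/

abbrev Alpha (τ : Sig) : Type := ℕ ⊕ (τ.Pred ⊕ τ.Const)

instance : Nonempty (Alpha τ) := ⟨Sum.inl 0⟩

def encT : Term τ → Alpha τ
  | .var n => .inl n
  | .const c => .inr (.inr c)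

lemma encT_inj : Function.Injective (encT (τ := τ)) := by
  intro a b h
  cases a <;> cases b <;> simp [encT, Alpha] at h <;> simp [h]

def enc : Formula τ → List (Alpha τ)
  | .atom P ts => .inl 0 :: .inr (.inl P) :: ((List.ofFn ts).map encT)
  | .bot => [.inl 1]
  | .imp A B => .inl 2 :: (enc A ++ enc B)
  | .and A B => .inl 3 :: (enc A ++ enc B)
  | .or A B => .inl 4 :: (enc A ++ enc B)
  | .snot A => .inl 5 :: enc A
  | .box A => .inl 6 :: enc A
  | .dia A => .inl 7 :: enc A
  | .all x A => .inl 8 :: .inl x :: enc A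
  | .ex x A => .inl 9 :: .inl x :: enc A

lemma enc_prefix : ∀ A : Formula τ, ∀ B : Formula τ, ∀ s t : List (Alpha τ),
    enc A ++ s = enc B ++ t → A = B ∧ s = t := by
  intro A
  induction A with
  | atom P ts =>
      intro B s t h
      cases B <;> simp [enc, Alpha, List.cons_append, List.append_assoc, List.map_ofFn] at h
      obtain ⟨hP, hr⟩ := h
      subst hP
      obtain ⟨hm, hst⟩ := List.append_inj hr (by simp)
      rename_i ts2
      have hts : ts = ts2 := by
        have h2 := List.ofFn_injective hm
        funext i
        exact encT_inj (congrFun h2 i)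
      subst hts
      exact ⟨rfl, hst⟩
  | bot =>
      intro B s t h
      cases B <;> simp [enc, Alpha, List.cons_append, List.append_assoc, List.map_ofFn] at h
      exact ⟨rfl, h⟩
  | imp A1 A2 ih1 ih2 =>
      intro B s t h
      cases B <;> simp [enc, Alpha, List.cons_append, List.append_assoc, List.map_ofFn] at h
      obtain ⟨h1, h2⟩ := ih1 _ _ _ h
      obtain ⟨h3, h4⟩ := ih2 _ _ _ h2
      exact ⟨by rw [h1, h3], h4⟩
  | and A1 A2 ih1 ih2 =>
      intro B s t h
      cases B <;> simp [enc, Alpha, List.cons_append, List.append_assoc, List.map_ofFn] at h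
      obtain ⟨h1, h2⟩ := ih1 _ _ _ h
      obtain ⟨h3, h4⟩ := ih2 _ _ _ h2
      exact ⟨by rw [h1, h3], h4⟩
  | or A1 A2 ih1 ih2 =>
      intro B s t h
      cases B <;> simp [enc, Alpha, List.cons_append, List.append_assoc, List.map_ofFn] at h
      obtain ⟨h1, h2⟩ := ih1 _ _ _ h
      obtain ⟨h3, h4⟩ := ih2 _ _ _ h2
      exact ⟨by rw [h1, h3], h4⟩
  | snot A ih =>
      intro B s t h
      cases B <;> simp [enc, Alpha, List.cons_append, List.append_assoc, List.map_ofFn] at h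
      obtain ⟨h1, h2⟩ := ih _ _ _ h
      exact ⟨by rw [h1], h2⟩
  | box A ih =>
      intro B s t h
      cases B <;> simp [enc, Alpha, List.cons_append, List.append_assoc, List.map_ofFn] at h
      obtain ⟨h1, h2⟩ := ih _ _ _ h
      exact ⟨by rw [h1], h2⟩
  | dia A ih =>
      intro B s t h
      cases B <;> simp [enc, Alpha, List.cons_append, List.append_assoc, List.map_ofFn] at h
      obtain ⟨h1, h2⟩ := ih _ _ _ h
      exact ⟨by rw [h1], h2⟩
  | all x A ih =>
      intro B s t h
      cases B <;> simp [enc, Alpha, List.cons_append, List.append_assoc, List.map_ofFn] at h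
      obtain ⟨hx, hr⟩ := h
      subst hx
      obtain ⟨h1, h2⟩ := ih _ _ _ hr
      exact ⟨by rw [h1], h2⟩
  | ex x A ih =>
      intro B s t h
      cases B <;> simp [enc, Alpha, List.cons_append, List.append_assoc, List.map_ofFn] at h
      obtain ⟨hx, hr⟩ := h
      subst hx
      obtain ⟨h1, h2⟩ := ih _ _ _ hr
      exact ⟨by rw [h1], h2⟩

lemma enc_inj : Function.Injective (enc (τ := τ)) := by
  intro A B h
  exact (enc_prefix A B [] [] (by simp [h])).1

end QLx
namespace QLx
open Formula

variable {τ : Sig}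

def SentT (σ : Sig) : Type := {φ : Formula σ // Sentence φ}

def iterImp (σ : Sig) : ℕ → Formula σ
  | 0 => .bot
  | n + 1 => (iterImp σ n).imp .bot

lemma iterImp_sent (σ : Sig) (n : ℕ) : Sentence (iterImp σ n) := by
  induction n with
  | zero => rfl
  | succ n ih => simp [iterImp, Sentence, Formula.fv] at ih ⊢; exact ih

lemma iterImp_inj (σ : Sig) : Function.Injective (iterImp σ) := by
  intro m n h
  induction m generalizing n with
  | zero => cases n with
    | zero => rfl
    | succ n => simp [iterImp] at h
  | succ m ih =>
      cases n with
      | zero => simp [iterImp] at h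
      | succ n =>
          simp only [iterImp, Formula.imp.injEq, and_true] at h
          rw [ih h]

instance (σ : Sig) : Infinite (SentT σ) :=
  Infinite.of_injective (fun n => (⟨iterImp σ n, iterImp_sent σ n⟩ : SentT σ))
    (fun m n h => iterImp_inj σ (congrArg Subtype.val h))

def predToSent (σ : Sig) (P : σ.Pred) : SentT σ :=
  ⟨Formula.all 0 (.atom P fun _ => .var 0), by
    simp only [Sentence, Formula.fv]
    rw [Finset.eq_empty_iff_forall_notMem]
    intro a ha
    rw [Finset.mem_erase] at ha
    obtain ⟨hne, hmem⟩ := ha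
    rw [Finset.mem_biUnion] at hmem
    obtain ⟨i, _, hi⟩ := hmem
    simp [Term.fv] at hi
    exact hne hi⟩

lemma predToSent_inj (σ : Sig) : Function.Injective (predToSent σ) := by
  intro P Q h
  have h' := congrArg Subtype.val h
  simp only [predToSent] at h'
  injection h' with h1 h2
  injection h2 with hP hts
  all_goals exact hP

def constToSent (σ : Sig) (P₀ : σ.Pred) (c : σ.Const) : SentT σ :=
  ⟨.atom P₀ fun _ => .const c, by
    simp only [Sentence, Formula.fv]
    rw [Finset.eq_empty_iff_forall_notMem]
    intro a ha
    rw [Finset.mem_biUnion] at ha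
    obtain ⟨i, _, hi⟩ := ha
    simp [Term.fv] at hi⟩

lemma constToSent_inj (σ : Sig) (P₀ : σ.Pred) (h1 : 1 ≤ σ.arity P₀) :
    Function.Injective (constToSent σ P₀) := by
  intro c c' h
  have h' := congrArg Subtype.val h
  simp only [constToSent] at h'
  injection h' with hP hts
  have h2 := congrFun hts ⟨0, h1⟩
  injection h2 with hc
  all_goals exact hc

/-! The case of a signature in which no constant can occur in a formula. -/

def ncl (a : Alpha τ) : Prop := ∀ c : τ.Const, a ≠ .inr (.inr c)

lemma enc_noconst (h0 : ∀ P : τ.Pred, τ.arity P = 0) (A : Formula τ) :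
    ∀ a ∈ enc A, ncl a := by
  induction A with
  | atom P ts =>
      have hnil : List.ofFn ts = [] := List.eq_nil_of_length_eq_zero (by simp [h0 P])
      intro a ha
      simp only [enc, hnil, List.map_nil, List.mem_cons, List.not_mem_nil, or_false] at ha
      rcases ha with rfl | rfl <;> intro c <;> simp
  | bot =>
      intro a ha
      simp only [enc, List.mem_singleton] at ha
      subst ha; intro c; simp
  | imp A B ihA ihB =>
      intro a ha
      simp only [enc, List.mem_cons, List.mem_append] at ha
      rcases ha with rfl | ha | ha
      · intro c; simp
      · exact ihA a ha
      · exact ihB a ha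
  | and A B ihA ihB =>
      intro a ha
      simp only [enc, List.mem_cons, List.mem_append] at ha
      rcases ha with rfl | ha | ha
      · intro c; simp
      · exact ihA a ha
      · exact ihB a ha
  | or A B ihA ihB =>
      intro a ha
      simp only [enc, List.mem_cons, List.mem_append] at ha
      rcases ha with rfl | ha | ha
      · intro c; simp
      · exact ihA a ha
      · exact ihB a ha
  | snot A ih =>
      intro a ha
      simp only [enc, List.mem_cons] at ha
      rcases ha with rfl | ha
      · intro c; simp
      · exact ih a ha
  | box A ih =>
      intro a ha
      simp only [enc, List.mem_cons] at ha
      rcases ha with rfl | ha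
      · intro c; simp
      · exact ih a ha
  | dia A ih =>
      intro a ha
      simp only [enc, List.mem_cons] at ha
      rcases ha with rfl | ha
      · intro c; simp
      · exact ih a ha
  | all x A ih =>
      intro a ha
      simp only [enc, List.mem_cons] at ha
      rcases ha with rfl | rfl | ha
      · intro c; simp
      · intro c; simp
      · exact ih a ha
  | ex x A ih =>
      intro a ha
      simp only [enc, List.mem_cons] at ha
      rcases ha with rfl | rfl | ha
      · intro c; simp
      · intro c; simp
      · exact ih a ha

def col : Alpha τ → ℕ ⊕ (τ.Pred ⊕ Unit) := Sum.map id (Sum.map id fun _ => ())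

lemma col_inj_ncl {a b : Alpha τ} (ha : ncl a) (hb : ncl b) (h : col a = col b) : a = b := by
  rcases a with n | p | c
  · rcases b with n' | p' | c' <;> simp [col] at h <;> simp [h]
  · rcases b with n' | p' | c' <;> simp [col] at h
    simp [h]
  · exact absurd rfl (ha c)

lemma map_col_inj : ∀ l₁ l₂ : List (Alpha τ), (∀ a ∈ l₁, ncl a) → (∀ a ∈ l₂, ncl a) →
    l₁.map col = l₂.map col → l₁ = l₂ := by
  intro l₁
  induction l₁ with
  | nil =>
      intro l₂ _ _ h
      cases l₂ with
      | nil => rfl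
      | cons b l => simp at h
  | cons a l ih =>
      intro l₂ h₁ h₂ h
      cases l₂ with
      | nil => simp at h
      | cons b l' =>
          simp only [List.map_cons, List.cons.injEq] at h
          have hab : a = b := col_inj_ncl (h₁ a (by simp)) (h₂ b (by simp)) h.1
          rw [hab, ih l' (fun x hx => h₁ x (by simp [hx])) (fun x hx => h₂ x (by simp [hx])) h.2]

lemma mk_formula_le (τ : Sig) : Cardinal.mk (Formula τ) ≤ max (Cardinal.mk (Alpha τ)) Cardinal.aleph0 := by
  calc Cardinal.mk (Formula τ) ≤ Cardinal.mk (List (Alpha τ)) := Cardinal.mk_le_of_injective enc_inj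
  _ = max (Cardinal.mk (Alpha τ)) Cardinal.aleph0 := Cardinal.mk_list_eq_max_mk_aleph0 _

/-- The crucial cardinality bound: sentences of the enriched signature are no more
numerous than `S`. -/
lemma mk_sentext_le (σ : Sig) (S : Type) (hS : Cardinal.mk S = Cardinal.mk (SentT σ)) :
    Cardinal.mk (SentT (sigExt σ S)) ≤ Cardinal.mk S := by
  have hinf : Cardinal.aleph0 ≤ Cardinal.mk S := by
    rw [hS]; exact Cardinal.aleph0_le_mk _
  have hPred : Cardinal.mk σ.Pred ≤ Cardinal.mk S := by
    rw [hS]; exact Cardinal.mk_le_of_injective (predToSent_inj σ)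
  have hsub : Cardinal.mk (SentT (sigExt σ S)) ≤ Cardinal.mk (Formula (sigExt σ S)) :=
    Cardinal.mk_subtype_le _
  by_cases hP : ∃ P : σ.Pred, 1 ≤ σ.arity P
  · obtain ⟨P₀, h1⟩ := hP
    have hConst : Cardinal.mk σ.Const ≤ Cardinal.mk S := by
      rw [hS]; exact Cardinal.mk_le_of_injective (constToSent_inj σ P₀ h1)
    have hAlpha : Cardinal.mk (Alpha (sigExt σ S)) ≤ Cardinal.mk S := by
      have e : Cardinal.mk (Alpha (sigExt σ S))
          = Cardinal.aleph0 + (Cardinal.mk σ.Pred + (Cardinal.mk σ.Const + Cardinal.mk S)) := by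
        simp [Alpha, Cardinal.mk_sum, Cardinal.lift_id, Cardinal.mk_nat, sigExt]
      rw [e]
      exact Cardinal.add_le_of_le hinf hinf
        (Cardinal.add_le_of_le hinf hPred (Cardinal.add_le_of_le hinf hConst le_rfl))
    exact hsub.trans ((mk_formula_le _).trans (max_le hAlpha hinf))
  · push_neg at hP
    have h0 : ∀ P : (sigExt σ S).Pred, (sigExt σ S).arity P = 0 := by
      intro P
      have := hP P
      simp only [sigExt] at *
      omega
    have hencc : Function.Injective (fun A : Formula (sigExt σ S) => (enc A).map col) := by
      intro A B h
      exact enc_inj (map_col_inj _ _ (enc_noconst h0 A) (enc_noconst h0 B) h)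
    have h2 : Cardinal.mk (Formula (sigExt σ S))
        ≤ Cardinal.mk (List (ℕ ⊕ (σ.Pred ⊕ Unit))) := Cardinal.mk_le_of_injective hencc
    rw [Cardinal.mk_list_eq_max_mk_aleph0] at h2
    have hAl : Cardinal.mk (ℕ ⊕ (σ.Pred ⊕ Unit)) ≤ Cardinal.mk S := by
      have e : Cardinal.mk (ℕ ⊕ (σ.Pred ⊕ Unit))
          = Cardinal.aleph0 + (Cardinal.mk σ.Pred + Cardinal.mk Unit) := by
        simp [Cardinal.mk_sum, Cardinal.lift_id, Cardinal.mk_nat]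
      rw [e]
      refine Cardinal.add_le_of_le hinf hinf (Cardinal.add_le_of_le hinf hPred ?_)
      exact le_trans (Cardinal.mk_le_aleph0) hinf
    exact hsub.trans (h2.trans (max_le hAl hinf))

end QLx
namespace QLx
open Formula

lemma cmap_disjList {σ₀ : Sig} {C C' : Type} {h : C → C' ⊕ Unit} {v : ℕ}
    (l : List (Formula (csig σ₀ C))) :
    cmap h v (disjList l) = disjList (l.map (cmap h v)) := by
  induction l with
  | nil => rfl
  | cons a l ih =>
      cases l with
      | nil => rfl
      | cons b l' =>
          show (cmap h v a).or (cmap h v (disjList (b :: l'))) = _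
          rw [ih]
          rfl

lemma cs_disjList {τ : Sig} {c : τ.Const} {l : List (Formula τ)}
    (hl : ∀ φ ∈ l, c ∉ cs φ) : c ∉ cs (disjList l) := by
  induction l with
  | nil => simp [disjList, cs]
  | cons a l ih =>
      cases l with
      | nil => exact hl a (by simp)
      | cons b l' =>
          show c ∉ cs (a.or (disjList (b :: l')))
          simp only [cs, Set.mem_union, not_or]
          exact ⟨hl a (by simp), ih fun φ hφ => hl φ (by simp [hφ])⟩

section Henkin

variable {σ : Sig} {S : Type} (w : SentT (sigExt σ S) ↪ S) (gSN : S ≃ S × ℕ)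

/-- Level of a constant of the enriched signature. -/
def hlev (σ : Sig) {S : Type} (gSN : S ≃ S × ℕ) : (sigExt σ S).Const → ℕ :=
  Sum.elim (fun _ => 0) (fun s => (gSN s).2)

/-- Henkin witness constant for a sentence. -/
def hwit (Φ : SentT (sigExt σ S)) : S :=
  gSN.symm (w Φ, mlev (hlev σ gSN) Φ.val + 1)

lemma hwit_lev (Φ : SentT (sigExt σ S)) :
    hlev σ gSN (Sum.inr (hwit w gSN Φ)) = mlev (hlev σ gSN) Φ.val + 1 := by
  simp [hlev, hwit]

lemma hwit_inj : Function.Injective (hwit w gSN) := by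
  intro a b h
  have := gSN.symm.injective h
  have h1 : w a = w b := congrArg Prod.fst this
  exact w.injective h1

/-- Henkin axiom for an existential sentence. -/
def hax (x : ℕ) (A : Formula (sigExt σ S)) (hs : Sentence (Formula.ex x A)) :
    Formula (sigExt σ S) :=
  (Formula.ex x A).imp (A.subst x (.const (.inr (hwit w gSN ⟨Formula.ex x A, hs⟩))))

/-- The set of all Henkin axioms. -/
def HSet : Set (Formula (sigExt σ S)) :=
  {ψ | ∃ x A hs, ψ = hax w gSN x A hs}

lemma subst_const_fv {τ : Sig} {x : ℕ} {A : Formula τ} {c : τ.Const}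
    (hs : (Formula.ex x A).fv = ∅) : (A.subst x (.const c)).fv = ∅ := by
  rw [Finset.eq_empty_iff_forall_notMem]
  intro a ha
  rcases Finset.mem_union.1 (fv_subst x (.const c) A ha) with hh | hh
  · have : (Formula.ex x A).fv = A.fv.erase x := rfl
    rw [hs] at this
    rw [← this] at hh
    simp at hh
  · simp [Term.fv] at hh

lemma hax_sentence (x : ℕ) (A : Formula (sigExt σ S)) (hs : Sentence (Formula.ex x A)) :
    Sentence (hax w gSN x A hs) := by
  show (_ ∪ _ : Finset ℕ) = ∅
  rw [hs, subst_const_fv hs]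
  rfl

lemma HSet_sentences : ∀ ψ ∈ HSet w gSN, Sentence ψ := by
  rintro ψ ⟨x, A, hs, rfl⟩
  exact hax_sentence w gSN x A hs

/-- Rank used to pick a maximal Henkin axiom. -/
def rnk : Formula (sigExt σ S) → ℕ
  | .imp e _ => mlev (hlev σ gSN) e + 1
  | _ => 0

lemma rnk_hax (x : ℕ) (A : Formula (sigExt σ S)) (hs : Sentence (Formula.ex x A)) :
    rnk gSN (hax w gSN x A hs) = mlev (hlev σ gSN) (Formula.ex x A) + 1 := rfl

lemma cs_hax (x : ℕ) (A : Formula (sigExt σ S)) (hs : Sentence (Formula.ex x A)) :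
    cs (hax w gSN x A hs) ⊆
      cs (Formula.ex x A) ∪ {Sum.inr (hwit w gSN ⟨Formula.ex x A, hs⟩)} := by
  intro c hc
  rcases (Set.mem_union _ _ _).1 hc with hh | hh
  · exact Set.mem_union_left _ hh
  · rcases (Set.mem_union _ _ _).1 (cs_subst _ _ _ hh) with hh | hh
    · exact Set.mem_union_left _ hh
    · exact Set.mem_union_right _ (by simpa [tcs] using hh)

/-- The main elimination lemma: finitely many Henkin axioms can be removed. -/
lemma hremove (Γ : Set (Formula σ)) (Δ : Set (Formula σ)) (h : ¬ DerivSet (QBK σ) Γ Δ) :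
    ∀ n : ℕ, ∀ F : Set (Formula (sigExt σ S)), F ⊆ HSet w gSN → F.Finite → F.ncard ≤ n →
      ¬ DerivSet (QBK (sigExt σ S)) (Formula.pl '' Γ ∪ F) (Formula.pl '' Δ) := by
  intro n
  induction n with
  | zero =>
      intro F _ hfin hcard hds
      have hF : F = ∅ := (Set.ncard_eq_zero hfin).1 (Nat.le_zero.1 hcard)
      subst hF
      rw [Set.union_empty] at hds
      obtain ⟨l, hl, hd⟩ := hds
      obtain ⟨N, hN⟩ := deriv_cmap (σ₀ := σ) (C := σ.Const ⊕ S) (C' := σ.Const) hd (hback σ S)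
      have hder := hN N le_rfl
      have himg : cmap (hback σ S) N '' (Formula.pl '' Γ) = Γ := by
        rw [Set.image_image]
        have : (fun ψ : Formula σ => cmap (hback σ S) N (Formula.pl ψ)) = id := by
          funext ψ; exact cmap_pl N ψ
        rw [this, Set.image_id]
      rw [himg, cmap_disjList] at hder
      refine h ⟨l.map (cmap (hback σ S) N), ?_, hder⟩
      intro φ hφ
      simp only [List.mem_map] at hφ
      obtain ⟨ψ, hψ, rfl⟩ := hφ
      obtain ⟨χ, hχ, rfl⟩ := hl ψ hψ
      rw [cmap_pl]
      exact hχ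
  | succ n ih =>
      intro F hFH hfin hcard hds
      rcases Set.eq_empty_or_nonempty F with rfl | hne
      · exact ih ∅ (Set.empty_subset _) Set.finite_empty (by simp) hds
      obtain ⟨hk, hkF, hmax'⟩ := Set.Finite.exists_maximalFor (rnk gSN) F hfin hne
      have hmax : ∀ ψ ∈ F, rnk gSN ψ ≤ rnk gSN hk := by
        intro ψ hψ
        by_contra hlt
        push_neg at hlt
        have := hmax' hψ (le_of_lt hlt)
        omega
      obtain ⟨x, A, hs, rfl⟩ := hFH hkF
      set E := Formula.ex x A with hE
      set d := hwit w gSN ⟨E, hs⟩ with hd'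
      set F' := F \ {hax w gSN x A hs} with hF'
      -- the witness constant is fresh for everything except the axiom itself
      have hlevd : hlev σ gSN (Sum.inr d) = mlev (hlev σ gSN) E + 1 := hwit_lev w gSN _
      have hdE : Sum.inr d ∉ cs E := by
        intro hmem
        have := le_mlev (g := hlev σ gSN) hmem
        omega
      have hdF' : ∀ ψ ∈ F', Sum.inr d ∉ cs ψ := by
        rintro ψ ⟨hψF, hψne⟩ hmem
        obtain ⟨x', A', hs', rfl⟩ := hFH hψF
        rcases (Set.mem_union _ _ _).1 (cs_hax w gSN x' A' hs' hmem) with hh | hh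
        · have h1 := le_mlev (g := hlev σ gSN) hh
          have h2 := hmax _ hψF
          rw [rnk_hax, rnk_hax] at h2
          rw [← hE] at h2
          omega
        · simp only [Set.mem_singleton_iff, Sum.inr.injEq] at hh
          have := hwit_inj w gSN hh
          have hEE : Formula.ex x' A' = E := (congrArg Subtype.val this).symm
          rw [hE] at hEE
          injection hEE with h1 h2
          subst h1; subst h2
          exact hψne rfl
      obtain ⟨l, hl, hd⟩ := hds
      have hsplit : Formula.pl '' Γ ∪ F = insert (hax w gSN x A hs) (Formula.pl '' Γ ∪ F') := by
        ext ψ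
        simp only [Set.mem_union, Set.mem_insert_iff, hF', Set.mem_diff,
          Set.mem_singleton_iff]
        constructor
        · rintro (hh | hh)
          · exact Or.inr (Or.inl hh)
          · by_cases he : ψ = hax w gSN x A hs
            · exact Or.inl he
            · exact Or.inr (Or.inr ⟨hh, he⟩)
        · rintro (rfl | hh | hh)
          · exact Or.inr hkF
          · exact Or.inl hh
          · exact Or.inr hh.1
      rw [hsplit] at hd
      have ded : Deriv (QBK (sigExt σ S)) (Formula.pl '' Γ ∪ F')
          ((hax w gSN x A hs).imp (disjList l)) :=
        deduction (hax_sentence w gSN x A hs) hd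
      obtain ⟨N, hN⟩ := deriv_cmap (σ₀ := σ) (C := σ.Const ⊕ S) (C' := σ.Const ⊕ S) ded
        (hdel (Sum.inr d))
      set dsj := disjList l with hdsj
      have hddsj : Sum.inr d ∉ cs dsj := by
        refine cs_disjList ?_
        intro φ hφ
        obtain ⟨χ, hχ, rfl⟩ := hl φ hφ
        exact cs_pl χ d
      set v := max N ((insert x (AV A ∪ dsj.fv)).sup id + 1) with hv'
      have hvN : v ≥ N := le_max_left _ _
      have hfresh : v ∉ insert x (AV A ∪ dsj.fv) :=
        fresh_notmem (lt_of_lt_of_le (Nat.lt_succ_self _) (le_max_right _ _))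
      simp only [Finset.mem_insert, Finset.mem_union, not_or] at hfresh
      have hder := hN v hvN
      have himg : cmap (hdel (Sum.inr d)) v '' (Formula.pl '' Γ ∪ F')
          = Formula.pl '' Γ ∪ F' := by
        refine image_eq_of_fixed ?_
        intro ψ hψ
        rcases hψ with ⟨χ, hχ, rfl⟩ | hψ
        · exact cmap_hdel_of_notmem (cs_pl χ d)
        · exact cmap_hdel_of_notmem (hdF' ψ hψ)
      have heq : cmap (hdel (Sum.inr d)) v ((hax w gSN x A hs).imp dsj)
          = ((E.imp (A.subst x (.var v))).imp dsj) := by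
        show ((cmap (hdel (Sum.inr d)) v (hax w gSN x A hs)).imp
          (cmap (hdel (Sum.inr d)) v dsj)) = _
        rw [cmap_hdel_of_notmem hddsj]
        congr 1
        show ((cmap (hdel (Sum.inr d)) v E).imp
          (cmap (hdel (Sum.inr d)) v (A.subst x (.const (.inr d))))) = _
        rw [cmap_hdel_of_notmem hdE]
        congr 1
        rw [cmap_subst (fun e : v = x => hfresh.1 e), cmap_hdel_of_notmem (A := A) hdE,
          tmap_hdel_self]
      rw [himg, heq] at hder
      have hdsj2 : Deriv (QBK (sigExt σ S)) (Formula.pl '' Γ ∪ F') dsj :=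
        dance hfresh.2.1 hfresh.1 hfresh.2.2 hs hder
      refine ih F' (fun ψ hψ => hFH hψ.1) hfin.diff ?_ ⟨l, hl, hdsj2⟩
      have := Set.ncard_diff_singleton_of_mem hkF
      rw [hF']
      omega

end Henkin
end QLx
namespace QLx
open Formula

lemma chain_finite_subset {α : Type*} {c : Set (Set α)} (hchain : IsChain (· ⊆ ·) c)
    (hcne : c.Nonempty) {t : Set α} (ht : t.Finite) :
    t ⊆ ⋃₀ c → ∃ T ∈ c, t ⊆ T := by
  refine Set.Finite.induction_on t ht ?_ ?_
  · intro _
    obtain ⟨T, hT⟩ := hcne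
    exact ⟨T, hT, Set.empty_subset T⟩
  · intro a s ha hs ih hsub
    obtain ⟨T1, hT1, hsT1⟩ := ih (subset_trans (Set.subset_insert a s) hsub)
    obtain ⟨T2, hT2, haT2⟩ := hsub (Set.mem_insert a s)
    by_cases hTT : T1 = T2
    · subst hTT
      exact ⟨T1, hT1, Set.insert_subset haT2 hsT1⟩
    · rcases hchain hT1 hT2 hTT with hle | hle
      · exact ⟨T2, hT2, Set.insert_subset haT2 (subset_trans hsT1 hle)⟩
      · exact ⟨T1, hT1, Set.insert_subset (hle haT2) hsT1⟩

end QLx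

theorem extension_lemma' (σ : Sig) (Γ : Set (Formula σ)) (hΓ : ∀ φ ∈ Γ, Sentence φ)
    (Δ : Set (Formula σ)) (h : ¬ DerivSet (QBK σ) Γ Δ) (S : Type)
    (hS : Cardinal.mk S = Cardinal.mk {φ : Formula σ // Sentence φ}) :
    ∃ Γ' : Set (Formula (sigExt σ S)), Saturated (QBK (sigExt σ S)) Γ' ∧
      Formula.pl '' Γ ⊆ Γ' ∧ ¬ DerivSet (QBK (sigExt σ S)) Γ' (Formula.pl '' Δ) := by
  classical
  open QLx in
  have hS' : Cardinal.mk S = Cardinal.mk (SentT σ) := hS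
  have hinf : Cardinal.aleph0 ≤ Cardinal.mk S := by
    rw [hS']; exact Cardinal.aleph0_le_mk _
  obtain ⟨w⟩ := (Cardinal.le_def _ _).1 (QLx.mk_sentext_le σ S hS')
  obtain ⟨gSN⟩ : Nonempty (S ≃ S × ℕ) := by
    refine Cardinal.eq.1 ?_
    have : Cardinal.mk (S × ℕ) = Cardinal.mk S := by
      rw [Cardinal.mk_prod, Cardinal.lift_id, Cardinal.lift_id, Cardinal.mk_nat]
      exact Cardinal.mul_aleph0_eq hinf
    exact this.symm
  set τS := sigExt σ S with hτS
  set seed := Formula.pl '' Γ ∪ QLx.HSet w gSN with hseed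
  have hseedsent : ∀ φ ∈ seed, Sentence φ := by
    rintro φ (⟨ψ, hψ, rfl⟩ | hφ)
    · show (Formula.pl ψ).fv = ∅
      rw [QLx.fv_pl]
      exact hΓ ψ hψ
    · exact QLx.HSet_sentences w gSN φ hφ
  have hseedcons : ¬ DerivSet (QBK τS) seed (Formula.pl '' Δ) := by
    rintro ⟨l, hl, hd⟩
    obtain ⟨Γ₀, hsub, hfin, hd0⟩ := QLx.deriv_finite hd
    set F := Γ₀ ∩ QLx.HSet w gSN with hF
    have hd1 : Deriv (QBK τS) (Formula.pl '' Γ ∪ F) (disjList l) := by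
      refine QLx.deriv_mono hd0 ?_
      intro ψ hψ
      rcases hsub hψ with hh | hh
      · exact Set.mem_union_left _ hh
      · exact Set.mem_union_right _ ⟨hψ, hh⟩
    exact QLx.hremove w gSN Γ Δ h F.ncard F Set.inter_subset_right
      (hfin.subset Set.inter_subset_left) le_rfl ⟨l, hl, hd1⟩
  set P : Set (Set (Formula τS)) :=
    {T | (∀ φ ∈ T, Sentence φ) ∧ seed ⊆ T ∧ ¬ DerivSet (QBK τS) T (Formula.pl '' Δ)} with hP
  have hseedP : seed ∈ P := ⟨hseedsent, subset_rfl, hseedcons⟩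
  obtain ⟨Γ', hsub', hmax⟩ := zorn_subset_nonempty P (by
    intro c hcP hchain hcne
    refine ⟨⋃₀ c, ⟨?_, ?_, ?_⟩, fun s hs => Set.subset_sUnion_of_mem hs⟩
    · rintro φ ⟨T, hT, hφ⟩
      exact (hcP hT).1 φ hφ
    · obtain ⟨T, hT⟩ := hcne
      exact subset_trans (hcP hT).2.1 (Set.subset_sUnion_of_mem hT)
    · rintro ⟨l, hl, hd⟩
      obtain ⟨Γ₀, hsub, hfin, hd0⟩ := QLx.deriv_finite hd
      obtain ⟨T, hT, hsubT⟩ := QLx.chain_finite_subset hchain hcne hfin hsub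
      exact (hcP hT).2.2 ⟨l, hl, QLx.deriv_mono hd0 hsubT⟩) seed hseedP
  obtain ⟨hsent', hseed', hcons'⟩ := hmax.1
  -- any underivable sentence extension is already inside
  have hmaximality : ∀ φ : Formula τS, Sentence φ → φ ∉ Γ' →
      DerivSet (QBK τS) (insert φ Γ') (Formula.pl '' Δ) := by
    intro φ hsφ hnot
    by_contra hnd
    have hmem : insert φ Γ' ∈ P := by
      refine ⟨?_, subset_trans hseed' (Set.subset_insert _ _), hnd⟩
      intro ψ hψ
      rcases Set.mem_insert_iff.1 hψ with rfl | hψ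
      · exact hsφ
      · exact hsent' ψ hψ
    have := hmax.2 hmem (Set.subset_insert _ _)
    exact hnot (this (Set.mem_insert φ Γ'))
  have hclosed : ∀ φ : Formula τS, Sentence φ → DerivSet (QBK τS) Γ' {φ} → φ ∈ Γ' := by
    intro φ hsφ hder
    by_contra hnot
    obtain ⟨l, hl, hd⟩ := hder
    have hdφ : Deriv (QBK τS) Γ' φ :=
      Deriv.mp (QLx.D.disj_all_eq l fun ψ hψ => hl ψ hψ) hd
    obtain ⟨l₂, hl₂, hd₂⟩ := hmaximality φ hsφ hnot
    have hded := QLx.deduction hsφ hd₂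
    exact hcons' ⟨l₂, hl₂, Deriv.mp hded hdφ⟩
  refine ⟨Γ', ⟨⟨hsent', ?_, hclosed, ?_⟩, ?_⟩,
    subset_trans Set.subset_union_left hseed', hcons'⟩
  · -- Γ' is not the set of all sentences
    intro heq
    have hbot : (Formula.bot : Formula τS) ∈ Γ' := by
      rw [heq]; exact rfl
    exact hcons' ⟨[], by simp, Deriv.hyp hbot⟩
  · -- disjunction property
    intro A B hor
    by_contra hnot
    push_neg at hnot
    obtain ⟨hA, hB⟩ := hnot
    have hsAB : Sentence (A.or B) := hsent' _ hor
    have hfv : A.fv ∪ B.fv = ∅ := hsAB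
    rw [Finset.union_eq_empty] at hfv
    obtain ⟨l₁, hl₁, hd₁⟩ := hmaximality A hfv.1 hA
    obtain ⟨l₂, hl₂, hd₂⟩ := hmaximality B hfv.2 hB
    have hded₁ := QLx.deduction hfv.1 hd₁
    have hded₂ := QLx.deduction hfv.2 hd₂
    have hor' : Deriv (QBK τS) Γ' ((disjList l₁).or (disjList l₂)) := by
      refine Deriv.mp (QLx.D.orElim ?_ ?_) (Deriv.hyp hor)
      · exact QLx.D.comp hded₁ (QLx.D.frmQ (QBKext.d1 _ _))
      · exact QLx.D.comp hded₂ (QLx.D.frmQ (QBKext.d2 _ _))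
    refine hcons' ⟨l₁ ++ l₂, ?_, QLx.D.disj_of_or hor'⟩
    intro φ hφ
    rcases List.mem_append.1 hφ with hφ | hφ
    · exact hl₁ φ hφ
    · exact hl₂ φ hφ
  · -- saturation
    intro x A hex
    have hsE : Sentence (Formula.ex x A) := hsent' _ hex
    have haxmem : QLx.hax w gSN x A hsE ∈ Γ' :=
      hseed' (Set.mem_union_right _ ⟨x, A, hsE, rfl⟩)
    have hsW : Sentence (A.subst x
        (.const (Sum.inr (QLx.hwit w gSN ⟨Formula.ex x A, hsE⟩) : σ.Const ⊕ S))) :=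
      QLx.subst_const_fv hsE
    have hdW : Deriv (QBK τS) Γ' (A.subst x
        (.const (Sum.inr (QLx.hwit w gSN ⟨Formula.ex x A, hsE⟩) : σ.Const ⊕ S))) :=
      Deriv.mp (Deriv.hyp (show (Formula.ex x A).imp _ ∈ Γ' from haxmem)) (Deriv.hyp hex)
    have hWmem := hclosed _ hsW ⟨[_], by simp, hdW⟩
    exact ⟨(Sum.inr (QLx.hwit w gSN ⟨Formula.ex x A, hsE⟩) : σ.Const ⊕ S), hWmem⟩
/-- **Extension lemma**: if Γ ⊬ Δ, then for any set S of the cardinality of Sent_σ there is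
a saturated σ_S-theory Γ′ ⊇ Γ with Γ′ ⊬ Δ. -/
theorem extension_lemma (σ : Sig) (Γ : Set (Formula σ)) (hΓ : ∀ φ ∈ Γ, Sentence φ)
    (Δ : Set (Formula σ)) (h : ¬ DerivSet (QBK σ) Γ Δ) (S : Type)
    (hS : Cardinal.mk S = Cardinal.mk {φ : Formula σ // Sentence φ}) :
    ∃ Γ' : Set (Formula (sigExt σ S)), Saturated (QBK (sigExt σ S)) Γ' ∧
      Formula.pl '' Γ ⊆ Γ' ∧ ¬ DerivSet (QBK (sigExt σ S)) Γ' (Formula.pl '' Δ) :=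
  extension_lemma' σ Γ hΓ Δ h S hS
end

section
/- Equivalence of the two Barcan schemes: every instance of Ba□ := ∀x□Φ→□∀xΦ is derivable in QBK♯ (the extension of QBK by the scheme Ba := ◇∃xΦ→∃x◇Φ), and every instance of Ba is derivable in QBK♯_{Ba□} (the extension of QBK by the scheme Ba□); hence the two extensions coincide as sets of formulas. -/
/-! Auxiliary derived rules for the Hilbert calculus. -/

section Aux

variable {σ : Sig} {Ex : Formula σ → Prop}

open Formula QBKext

/-- From ⊢A→(X→Y) and ⊢A→X infer ⊢A→Y. -/
private lemma mpu {A X Y : Formula σ} (h1 : QBKext σ Ex (A.imp (X.imp Y)))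
    (h2 : QBKext σ Ex (A.imp X)) : QBKext σ Ex (A.imp Y) :=
  .mp (.mp (.i2 A X Y) h1) h2

private lemma lift1 {B : Formula σ} (h : QBKext σ Ex B) (A : Formula σ) :
    QBKext σ Ex (A.imp B) := .mp (.i1 B A) h

private lemma iRefl (A : Formula σ) : QBKext σ Ex (A.imp A) :=
  mpu (.i1 A (A.imp A)) (.i1 A A)

private lemma dtrans {A B C : Formula σ} (h1 : QBKext σ Ex (A.imp B))
    (h2 : QBKext σ Ex (B.imp C)) : QBKext σ Ex (A.imp C) :=
  mpu (lift1 h2 A) h1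

private lemma limp {Y B C : Formula σ} (h : QBKext σ Ex (B.imp C)) :
    QBKext σ Ex ((Y.imp B).imp (Y.imp C)) :=
  .mp (.i2 Y B C) (lift1 h Y)

private lemma contrap {A B : Formula σ} (h : QBKext σ Ex (A.imp B)) :
    QBKext σ Ex (B.neg.imp A.neg) := by
  have h1 : QBKext σ Ex (B.neg.imp (A.imp B)) := lift1 h B.neg
  have h2 : QBKext σ Ex (B.neg.imp (A.imp B.neg)) := .i1 B.neg A
  have h3 : QBKext σ Ex (B.neg.imp ((A.imp B).imp (A.imp .bot))) :=
    dtrans h2 (.i2 A B .bot)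
  exact mpu h3 h1

private lemma dni (A : Formula σ) : QBKext σ Ex (A.imp A.neg.neg) := by
  have h1 : QBKext σ Ex (A.imp (A.neg.imp A)) := .i1 A A.neg
  have h2 : QBKext σ Ex (A.imp (A.neg.imp (A.imp .bot))) := lift1 (iRefl A.neg) A
  have h3 : QBKext σ Ex (A.imp ((A.neg.imp (A.imp .bot)).imp ((A.neg.imp A).imp (A.neg.imp .bot)))) :=
    lift1 (.i2 A.neg A .bot) A
  exact mpu (mpu h3 h2) h1

private lemma dne (A : Formula σ) : QBKext σ Ex (A.neg.neg.imp A) := by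
  have p1 : QBKext σ Ex (A.neg.imp (A.neg.neg.imp .bot)) := dni A.neg
  have p2 : QBKext σ Ex (A.neg.imp (A.neg.neg.imp A)) := dtrans p1 (limp (.n2 A))
  have p3 : QBKext σ Ex (A.imp (A.neg.neg.imp A)) := .i1 A A.neg.neg
  exact .mp (.mp (.mp (.d3 A A.neg (A.neg.neg.imp A)) p3) p2) (.n1 A)

private lemma fiff1 {A B : Formula σ} (h : QBKext σ Ex (A.fiff B)) :
    QBKext σ Ex (A.imp B) := .mp (.c1 _ _) h

private lemma fiff2 {A B : Formula σ} (h : QBKext σ Ex (A.fiff B)) :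
    QBKext σ Ex (B.imp A) := .mp (.c2 _ _) h

private lemma substT_var (x : ℕ) (s : Term σ) : Term.substT x s (.var x) = s := by
  simp [Term.substT]

private lemma subst_self (x : ℕ) (A : Formula σ) : A.subst x (.var x) = A := by
  induction A <;> simp [Formula.subst, substT_var, *]

private lemma freefor_var (x : ℕ) (A : Formula σ) : FreeFor x (.var x) A := by
  induction A with
  | atom P ts => trivial
  | bot => trivial
  | imp A B ihA ihB => exact ⟨ihA, ihB⟩
  | and A B ihA ihB => exact ⟨ihA, ihB⟩
  | or A B ihA ihB => exact ⟨ihA, ihB⟩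
  | snot A ih => exact ih
  | box A ih => exact ih
  | dia A ih => exact ih
  | all y A ih =>
      by_cases h : y = x
      · left; subst h; simp [Formula.fv]
      · right; exact ⟨by simp [Term.fv, h], ih⟩
  | ex y A ih =>
      by_cases h : y = x
      · left; subst h; simp [Formula.fv]
      · right; exact ⟨by simp [Term.fv, h], ih⟩

private lemma q1' (x : ℕ) (A : Formula σ) : QBKext σ Ex ((Formula.all x A).imp A) := by
  have := QBKext.q1 (σ := σ) (Ex := Ex) (freefor_var x A)
  rwa [subst_self] at this

private lemma q2' (x : ℕ) (A : Formula σ) : QBKext σ Ex (A.imp (Formula.ex x A)) := by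
  have := QBKext.q2 (σ := σ) (Ex := Ex) (freefor_var x A)
  rwa [subst_self] at this

private lemma notfv_ex (x : ℕ) (A : Formula σ) : x ∉ (Formula.ex x A).fv := by
  simp [Formula.fv]

private lemma notfv_all (x : ℕ) (A : Formula σ) : x ∉ (Formula.all x A).fv := by
  simp [Formula.fv]

private lemma notfv_neg_ex (x : ℕ) (A : Formula σ) : x ∉ (Formula.ex x A).neg.fv := by
  simp [Formula.neg, Formula.fv]

private lemma notfv_neg_all (x : ℕ) (A : Formula σ) : x ∉ (Formula.all x A).neg.fv := by
  simp [Formula.neg, Formula.fv]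

private lemma exMono {A B : Formula σ} (h : QBKext σ Ex (A.imp B)) (x : ℕ) :
    QBKext σ Ex ((Formula.ex x A).imp (Formula.ex x B)) :=
  .br2 (dtrans h (q2' x B)) (notfv_ex x B)

private lemma allMono {A B : Formula σ} (h : QBKext σ Ex (A.imp B)) (x : ℕ) :
    QBKext σ Ex ((Formula.all x A).imp (Formula.all x B)) :=
  .br1 (dtrans (q1' x A) h) (notfv_all x A)

/-- ∀x¬A → ¬∃xA -/
private lemma allNegEx (x : ℕ) (A : Formula σ) :
    QBKext σ Ex ((Formula.all x A.neg).imp (Formula.ex x A).neg) := by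
  have s3 : QBKext σ Ex (A.imp (Formula.all x A.neg).neg) :=
    dtrans (dni A) (contrap (q1' x A.neg))
  have s4 : QBKext σ Ex ((Formula.ex x A).imp (Formula.all x A.neg).neg) :=
    .br2 s3 (notfv_neg_all x A.neg)
  exact dtrans (dni _) (contrap s4)

/-- ¬∃xA → ∀x¬A -/
private lemma negExAll (x : ℕ) (A : Formula σ) :
    QBKext σ Ex ((Formula.ex x A).neg.imp (Formula.all x A.neg)) :=
  .br1 (contrap (q2' x A)) (notfv_neg_ex x A)

/-- ¬∀xA → ∃x¬A -/
private lemma negAllEx (x : ℕ) (A : Formula σ) :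
    QBKext σ Ex ((Formula.all x A).neg.imp (Formula.ex x A.neg)) := by
  have t3 : QBKext σ Ex ((Formula.ex x A.neg).neg.imp (Formula.all x A)) :=
    dtrans (negExAll x A.neg) (allMono (dne A) x)
  exact dtrans (contrap t3) (dne _)

/-- ¬◇¬A → □A -/
private lemma boxOfNegDiaNeg (A : Formula σ) :
    QBKext σ Ex (A.neg.dia.neg.imp A.box) :=
  dtrans (contrap (fiff1 (.m1 A))) (dne _)

/-- ◇A → ¬□¬A -/
private lemma diaToNegBoxNeg (A : Formula σ) :
    QBKext σ Ex (A.dia.imp A.neg.box.neg) :=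
  dtrans (dni _) (contrap (fiff2 (.m2 A)))

/-- ¬□¬A → ◇A -/
private lemma negBoxNegToDia (A : Formula σ) :
    QBKext σ Ex (A.neg.box.neg.imp A.dia) :=
  dtrans (contrap (fiff1 (.m2 A))) (dne _)

/-- Ba□ is derivable in QBK♯. -/
private lemma baBox_of_sharp (Φ : Formula σ) (x : ℕ) :
    QBKext σ (BaAx σ) ((Formula.all x Φ.box).imp (Formula.all x Φ).box) := by
  have h1 : QBKext σ (BaAx σ) (Φ.neg.dia.imp Φ.box.neg) := fiff2 (.m1 Φ)
  have h3 : QBKext σ (BaAx σ) ((Formula.ex x Φ.neg).dia.imp (Formula.ex x Φ.neg.dia)) :=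
    .extra ⟨x, Φ.neg, rfl⟩
  have h4 := contrap (dtrans h3 (exMono h1 x))
  have h5 : QBKext σ (BaAx σ) ((Formula.all x Φ.box).imp (Formula.ex x Φ.box.neg).neg) :=
    dtrans (allMono (dni Φ.box) x) (allNegEx x Φ.box.neg)
  have h9 := contrap (.md (negAllEx x Φ) : QBKext σ (BaAx σ)
    ((Formula.all x Φ).neg.dia.imp (Formula.ex x Φ.neg).dia))
  exact dtrans (dtrans h5 h4) (dtrans h9 (boxOfNegDiaNeg (Formula.all x Φ)))

/-- Ba is derivable in QBK♯_{Ba□}. -/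
private lemma ba_of_sharpBox (Φ : Formula σ) (x : ℕ) :
    QBKext σ (BaBoxAx σ) ((Formula.ex x Φ).dia.imp (Formula.ex x Φ.dia)) := by
  have a1 := diaToNegBoxNeg (Ex := BaBoxAx σ) (Formula.ex x Φ)
  have a2' := contrap (.mb (allNegEx x Φ) : QBKext σ (BaBoxAx σ)
    ((Formula.all x Φ.neg).box.imp (Formula.ex x Φ).neg.box))
  have a3 := contrap (.extra ⟨x, Φ.neg, rfl⟩ : QBKext σ (BaBoxAx σ)
    ((Formula.all x Φ.neg.box).imp (Formula.all x Φ.neg).box))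
  have a4 := negAllEx (Ex := BaBoxAx σ) x Φ.neg.box
  have a6 := exMono (Ex := BaBoxAx σ) (negBoxNegToDia Φ) x
  exact dtrans a1 (dtrans a2' (dtrans a3 (dtrans a4 a6)))

private lemma ext_mono {Ex1 Ex2 : Formula σ → Prop}
    (h : ∀ φ, Ex1 φ → QBKext σ Ex2 φ) {φ : Formula σ}
    (hd : QBKext σ Ex1 φ) : QBKext σ Ex2 φ := by
  induction hd with
  | extra he => exact h _ he
  | i1 A B => exact .i1 A B
  | i2 A B C => exact .i2 A B C
  | c1 A B => exact .c1 A B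
  | c2 A B => exact .c2 A B
  | c3 A B => exact .c3 A B
  | d1 A B => exact .d1 A B
  | d2 A B => exact .d2 A B
  | d3 A B C => exact .d3 A B C
  | n1 A => exact .n1 A
  | n2 A => exact .n2 A
  | sn1 A => exact .sn1 A
  | sn2 A B => exact .sn2 A B
  | sn3 A B => exact .sn3 A B
  | sn4 A B => exact .sn4 A B
  | sn5 => exact .sn5
  | k1 A B => exact .k1 A B
  | k2 A => exact .k2 A
  | m1 A => exact .m1 A
  | m2 A => exact .m2 A
  | m3 A => exact .m3 A
  | m4 A => exact .m4 A
  | q1 hf => exact .q1 hf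
  | q2 hf => exact .q2 hf
  | q3 x A => exact .q3 x A
  | q4 x A => exact .q4 x A
  | mp _ _ ih1 ih2 => exact .mp ih1 ih2
  | mb _ ih => exact .mb ih
  | md _ ih => exact .md ih
  | br1 _ hx ih => exact .br1 ih hx
  | br2 _ hx ih => exact .br2 ih hx

end Aux

/-- **Equivalence of the two Barcan schemes**: every instance of ∀x□Φ→□∀xΦ is derivable in
QBK♯ (QBK + ◇∃xΦ→∃x◇Φ), every instance of ◇∃xΦ→∃x◇Φ is derivable in QBK♯_{Ba□}
(QBK + ∀x□Φ→□∀xΦ), and the two extensions coincide. -/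
theorem barcan_schemes_equivalent (σ : Sig) :
    (∀ (Φ : Formula σ) (x : ℕ), QBKsharp σ ((Formula.all x Φ.box).imp (Formula.all x Φ).box)) ∧
    (∀ (Φ : Formula σ) (x : ℕ),
      QBKsharpBox σ ((Formula.ex x Φ).dia.imp (Formula.ex x Φ.dia))) ∧
    (∀ ψ : Formula σ, QBKsharp σ ψ ↔ QBKsharpBox σ ψ) := by
  refine ⟨fun Φ x => baBox_of_sharp Φ x, fun Φ x => ba_of_sharpBox Φ x, fun ψ => ?_⟩
  constructor
  · exact ext_mono (fun φ ⟨x, A, hφ⟩ => hφ ▸ ba_of_sharpBox A x)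
  · exact ext_mono (fun φ ⟨x, A, hφ⟩ => hφ ▸ baBox_of_sharp A x)
end

section
/- Existence lemma for the constant-domain canonical model: assume σ is countable and let σ★ be σ enriched with a fresh constant for each element of a fixed set S★ of cardinality |Sent_σ|. Let W♯ be the set of all saturated σ★-theories with respect to the calculus QBK♯ (QBK plus the Barcan scheme ◇∃xΦ→∃x◇Φ). Then for every Γ ∈ W♯ and every σ★-sentence Φ: (i) ◇Φ ∈ Γ if and only if there exists Γ′ ∈ W♯ with {Ψ : □Ψ∈Γ} ⊆ Γ′ and Φ ∈ Γ′; (ii) □Φ ∈ Γ if and only if Φ ∈ Γ′ for every Γ′ ∈ W♯ with {Ψ : □Ψ∈Γ} ⊆ Γ′. -/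
/-! ### Auxiliary development -/

namespace QBKAux

variable {σ : Sig}

/-! #### Free variables and substitution -/

theorem fv_subst_const (x : ℕ) (c : σ.Const) (A : Formula σ) :
    (A.subst x (.const c)).fv ⊆ A.fv.erase x := by
  induction A with
  | atom P ts =>
    intro a ha
    simp only [Formula.subst, Formula.fv, Finset.mem_biUnion, Finset.mem_univ, true_and] at ha
    obtain ⟨i, hi⟩ := ha
    simp [Term.substT, Term.fv] at hi
  | bot => simp [Formula.subst, Formula.fv]
  | imp A B ihA ihB =>
    intro a ha
    simp only [Formula.subst, Formula.fv, Finset.mem_union] at ha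
    rcases ha with h | h
    · have := ihA h; simp only [Finset.mem_union, Finset.mem_erase, Formula.fv] at this ⊢; tauto
    · have := ihB h; simp only [Finset.mem_union, Finset.mem_erase, Formula.fv] at this ⊢; tauto
  | and A B ihA ihB =>
    intro a ha
    simp only [Formula.subst, Formula.fv, Finset.mem_union] at ha
    rcases ha with h | h
    · have := ihA h; simp only [Finset.mem_union, Finset.mem_erase, Formula.fv] at this ⊢; tauto
    · have := ihB h; simp only [Finset.mem_union, Finset.mem_erase, Formula.fv] at this ⊢; tauto
  | or A B ihA ihB =>
    intro a ha
    simp only [Formula.subst, Formula.fv, Finset.mem_union] at ha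
    rcases ha with h | h
    · have := ihA h; simp only [Finset.mem_union, Finset.mem_erase, Formula.fv] at this ⊢; tauto
    · have := ihB h; simp only [Finset.mem_union, Finset.mem_erase, Formula.fv] at this ⊢; tauto
  | snot A ih => exact ih
  | box A ih => exact ih
  | dia A ih => exact ih
  | all y A ih =>
    by_cases h : y = x
    · subst h
      simp only [Formula.subst, if_pos rfl, ↓reduceIte]
      intro a ha
      simp only [Formula.fv, Finset.mem_erase] at ha ⊢
      exact ⟨ha.1, ha.1, ha.2⟩
    · simp only [Formula.subst, if_neg h]
      intro a ha
      simp only [Formula.fv, Finset.mem_erase] at ha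
      have := ih ha.2
      simp only [Finset.mem_erase, Formula.fv] at this ⊢
      tauto
  | ex y A ih =>
    by_cases h : y = x
    · subst h
      simp only [Formula.subst, if_pos rfl, ↓reduceIte]
      intro a ha
      simp only [Formula.fv, Finset.mem_erase] at ha ⊢
      exact ⟨ha.1, ha.1, ha.2⟩
    · simp only [Formula.subst, if_neg h]
      intro a ha
      simp only [Formula.fv, Finset.mem_erase] at ha
      have := ih ha.2
      simp only [Finset.mem_erase, Formula.fv] at this ⊢
      tauto

theorem subst_var_self (x : ℕ) (A : Formula σ) : A.subst x (.var x) = A := by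
  induction A with
  | atom P ts => simp [Formula.subst, Term.substT]
  | bot => rfl
  | imp A B ihA ihB => simp [Formula.subst, ihA, ihB]
  | and A B ihA ihB => simp [Formula.subst, ihA, ihB]
  | or A B ihA ihB => simp [Formula.subst, ihA, ihB]
  | snot A ih => simp [Formula.subst, ih]
  | box A ih => simp [Formula.subst, ih]
  | dia A ih => simp [Formula.subst, ih]
  | all y A ih => by_cases h : y = x <;> simp [Formula.subst, h, ih]
  | ex y A ih => by_cases h : y = x <;> simp [Formula.subst, h, ih]

theorem subst_ex_self (x : ℕ) (t : Term σ) (A : Formula σ) :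
    (Formula.ex x A).subst x t = Formula.ex x A := by
  simp [Formula.subst]

theorem freeFor_var_self (x : ℕ) (A : Formula σ) : FreeFor x (.var x) A := by
  induction A with
  | atom P ts => trivial
  | bot => trivial
  | imp A B ihA ihB => exact ⟨ihA, ihB⟩
  | and A B ihA ihB => exact ⟨ihA, ihB⟩
  | or A B ihA ihB => exact ⟨ihA, ihB⟩
  | snot A ih => exact ih
  | box A ih => exact ih
  | dia A ih => exact ih
  | all y A ih =>
    by_cases h : y = x
    · subst h
      exact Or.inl (by simp [Formula.fv])
    · exact Or.inr ⟨by simp [Term.fv, h], ih⟩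
  | ex y A ih =>
    by_cases h : y = x
    · subst h
      exact Or.inl (by simp [Formula.fv])
    · exact Or.inr ⟨by simp [Term.fv, h], ih⟩

/-! #### Sentences -/

theorem sent_imp {A B : Formula σ} : Sentence (A.imp B) ↔ Sentence A ∧ Sentence B := by
  simp [Sentence, Formula.fv, Finset.union_eq_empty]

theorem sent_and {A B : Formula σ} : Sentence (A.and B) ↔ Sentence A ∧ Sentence B := by
  simp [Sentence, Formula.fv, Finset.union_eq_empty]

theorem sent_or {A B : Formula σ} : Sentence (A.or B) ↔ Sentence A ∧ Sentence B := by
  simp [Sentence, Formula.fv, Finset.union_eq_empty]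

theorem sent_bot : Sentence (Formula.bot : Formula σ) := rfl

theorem sent_box {A : Formula σ} : Sentence A.box ↔ Sentence A := Iff.rfl

theorem sent_dia {A : Formula σ} : Sentence A.dia ↔ Sentence A := Iff.rfl

theorem sent_neg {A : Formula σ} : Sentence A.neg ↔ Sentence A := by
  simp [Formula.neg, sent_imp, sent_bot]

theorem sent_ex_of_sent {x : ℕ} {A : Formula σ} (h : Sentence A) :
    Sentence (Formula.ex x A) := by
  have h' : A.fv = ∅ := h
  show (Formula.ex x A).fv = ∅
  simp [Formula.fv, h']

theorem sent_subst_const {x : ℕ} {A : Formula σ} (h : Sentence (Formula.ex x A))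
    (c : σ.Const) : Sentence (A.subst x (.const c)) := by
  have h' : A.fv.erase x = ∅ := h
  have := fv_subst_const x c A
  rw [h'] at this
  exact Finset.subset_empty.mp this

end QBKAux
namespace QBKAux

variable {σ : Sig}

/-! #### Countability of formulas -/

def tenc (fC : σ.Const → ℕ) : Term σ → ℕ
  | .var x => Nat.pair 0 x
  | .const c => Nat.pair 1 (fC c)

theorem tenc_inj {fC : σ.Const → ℕ} (hC : Function.Injective fC) :
    Function.Injective (tenc fC) := by
  intro u v h
  cases u <;> cases v <;> simp only [tenc, Nat.pair_eq_pair] at h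
  · simp [h.2]
  · exact absurd h.1 (by decide)
  · exact absurd h.1 (by decide)
  · simp [hC h.2]

def fenc (fP : σ.Pred → ℕ) (fC : σ.Const → ℕ) : Formula σ → ℕ
  | .atom P ts =>
      Nat.pair 0 (Nat.pair (fP P) (Encodable.encode ((List.ofFn ts).map (tenc fC))))
  | .bot => Nat.pair 1 0
  | .imp A B => Nat.pair 2 (Nat.pair (fenc fP fC A) (fenc fP fC B))
  | .and A B => Nat.pair 3 (Nat.pair (fenc fP fC A) (fenc fP fC B))
  | .or A B => Nat.pair 4 (Nat.pair (fenc fP fC A) (fenc fP fC B))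
  | .snot A => Nat.pair 5 (fenc fP fC A)
  | .box A => Nat.pair 6 (fenc fP fC A)
  | .dia A => Nat.pair 7 (fenc fP fC A)
  | .all x A => Nat.pair 8 (Nat.pair x (fenc fP fC A))
  | .ex x A => Nat.pair 9 (Nat.pair x (fenc fP fC A))

theorem fenc_inj {fP : σ.Pred → ℕ} {fC : σ.Const → ℕ}
    (hP : Function.Injective fP) (hC : Function.Injective fC) :
    Function.Injective (fenc fP fC) := by
  intro A
  induction A with
  | atom P ts =>
    intro B h
    cases B <;> simp only [fenc, Nat.pair_eq_pair] at h
    case atom Q us =>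
      obtain ⟨-, hPQ, hl⟩ := h
      obtain rfl : P = Q := hP hPQ
      have hl' := Encodable.encode_injective hl
      have h2 := List.map_injective_iff.mpr (tenc_inj hC) hl'
      have h3 := List.ofFn_injective h2
      simp [h3]
    all_goals exact absurd h.1 (by decide)
  | bot =>
    intro B h
    cases B <;> simp only [fenc, Nat.pair_eq_pair] at h
    case bot => rfl
    all_goals exact absurd h.1 (by decide)
  | imp A1 A2 ih1 ih2 =>
    intro B h
    cases B <;> simp only [fenc, Nat.pair_eq_pair] at h
    case imp B1 B2 => simp [ih1 h.2.1, ih2 h.2.2]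
    all_goals exact absurd h.1 (by decide)
  | and A1 A2 ih1 ih2 =>
    intro B h
    cases B <;> simp only [fenc, Nat.pair_eq_pair] at h
    case and B1 B2 => simp [ih1 h.2.1, ih2 h.2.2]
    all_goals exact absurd h.1 (by decide)
  | or A1 A2 ih1 ih2 =>
    intro B h
    cases B <;> simp only [fenc, Nat.pair_eq_pair] at h
    case or B1 B2 => simp [ih1 h.2.1, ih2 h.2.2]
    all_goals exact absurd h.1 (by decide)
  | snot A ih =>
    intro B h
    cases B <;> simp only [fenc, Nat.pair_eq_pair] at h
    case snot B => simp [ih h.2]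
    all_goals exact absurd h.1 (by decide)
  | box A ih =>
    intro B h
    cases B <;> simp only [fenc, Nat.pair_eq_pair] at h
    case box B => simp [ih h.2]
    all_goals exact absurd h.1 (by decide)
  | dia A ih =>
    intro B h
    cases B <;> simp only [fenc, Nat.pair_eq_pair] at h
    case dia B => simp [ih h.2]
    all_goals exact absurd h.1 (by decide)
  | all x A ih =>
    intro B h
    cases B <;> simp only [fenc, Nat.pair_eq_pair] at h
    case all y B => simp [h.2.1, ih h.2.2]
    all_goals exact absurd h.1 (by decide)
  | ex x A ih =>
    intro B h
    cases B <;> simp only [fenc, Nat.pair_eq_pair] at h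
    case ex y B => simp [h.2.1, ih h.2.2]
    all_goals exact absurd h.1 (by decide)

instance instCountableFormula [Countable σ.Pred] [Countable σ.Const] :
    Countable (Formula σ) := by
  obtain ⟨fP, hP⟩ := countable_iff_exists_injective σ.Pred |>.mp inferInstance
  obtain ⟨fC, hC⟩ := countable_iff_exists_injective σ.Const |>.mp inferInstance
  exact (countable_iff_exists_injective _).mpr ⟨fenc fP fC, fenc_inj hP hC⟩

instance : Nonempty (Formula σ) := ⟨.bot⟩

end QBKAux
namespace QBKAux

/-! #### A natural-deduction layer over the Hilbert calculus -/

variable {σ : Sig} {Ex : Formula σ → Prop}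

local notation "Q" => QBKext σ Ex

inductive HD (Ex : Formula σ → Prop) : List (Formula σ) → Formula σ → Prop where
  | hyp {hs φ} : φ ∈ hs → HD Ex hs φ
  | thm {hs φ} : QBKext σ Ex φ → HD Ex hs φ
  | mp {hs φ ψ} : HD Ex hs (φ.imp ψ) → HD Ex hs φ → HD Ex hs ψ

theorem HD.h0 {hs : List (Formula σ)} {φ : Formula σ} : HD Ex (φ :: hs) φ :=
  .hyp List.mem_cons_self

theorem HD.h1 {hs : List (Formula σ)} {φ ψ : Formula σ} : HD Ex (ψ :: φ :: hs) φ :=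
  .hyp (by simp)

theorem HD.h2 {hs : List (Formula σ)} {φ ψ χ : Formula σ} : HD Ex (χ :: ψ :: φ :: hs) φ :=
  .hyp (by simp)

theorem Q.id (A : Formula σ) : Q (A.imp A) :=
  QBKext.mp (QBKext.mp (QBKext.i2 A (A.imp A) A) (QBKext.i1 A (A.imp A))) (QBKext.i1 A A)

theorem HD.ded' {hs' : List (Formula σ)} {B : Formula σ} (h : HD Ex hs' B) :
    ∀ {A : Formula σ} {hs : List (Formula σ)}, hs' = A :: hs → HD Ex hs (A.imp B) := by
  induction h with
  | hyp hφ =>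
    intro A hs he
    subst he
    rcases List.mem_cons.mp hφ with rfl | hφ
    · exact .thm (Q.id _)
    · exact .mp (.thm (QBKext.i1 _ _)) (.hyp hφ)
  | thm h =>
    intro A hs he
    exact .mp (.thm (QBKext.i1 _ _)) (.thm h)
  | mp h1 h2 ih1 ih2 =>
    intro A hs he
    exact .mp (.mp (.thm (QBKext.i2 _ _ _)) (ih1 he)) (ih2 he)

theorem HD.ded {hs : List (Formula σ)} {A B : Formula σ}
    (h : HD Ex (A :: hs) B) : HD Ex hs (A.imp B) := h.ded' rfl

theorem HD.close {A : Formula σ} (h : HD Ex [] A) : Q A := by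
  generalize hl : ([] : List (Formula σ)) = l at h
  induction h with
  | hyp hφ => subst hl; simp at hφ
  | thm h => exact h
  | mp h1 h2 ih1 ih2 => exact QBKext.mp ih1 ih2

/-! #### Derived rules and theorems -/

theorem Q.constImp {A B : Formula σ} (h : Q B) : Q (A.imp B) :=
  QBKext.mp (QBKext.i1 B A) h

theorem Q.trans {A B C : Formula σ} (h1 : Q (A.imp B)) (h2 : Q (B.imp C)) :
    Q (A.imp C) :=
  HD.close <| .ded <| .mp (.thm h2) (.mp (.thm h1) .h0)

theorem Q.swap {A B C : Formula σ} (h : Q (A.imp (B.imp C))) : Q (B.imp (A.imp C)) :=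
  HD.close <| .ded <| .ded <| .mp (.mp (.thm h) .h0) .h1

theorem Q.curry {A B C : Formula σ} (h : Q ((A.and B).imp C)) : Q (A.imp (B.imp C)) :=
  HD.close <| .ded <| .ded <| .mp (.thm h) (.mp (.mp (.thm (QBKext.c3 A B)) .h1) .h0)

theorem Q.uncurry {A B C : Formula σ} (h : Q (A.imp (B.imp C))) : Q ((A.and B).imp C) :=
  HD.close <| .ded <|
    .mp (.mp (.thm h) (.mp (.thm (QBKext.c1 A B)) .h0)) (.mp (.thm (QBKext.c2 A B)) .h0)

theorem Q.orElim {A B C : Formula σ} (h1 : Q (A.imp C)) (h2 : Q (B.imp C)) :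
    Q ((A.or B).imp C) :=
  QBKext.mp (QBKext.mp (QBKext.d3 A B C) h1) h2

theorem Q.dne (A : Formula σ) : Q (A.neg.neg.imp A) := by
  apply HD.close
  apply HD.ded
  have h1 : HD Ex [A.neg.neg] (A.neg.imp A) :=
    .ded (.mp (.thm (QBKext.n2 A)) (.mp .h1 .h0))
  exact .mp (.mp (.mp (.thm (QBKext.d3 A A.neg A)) (.thm (Q.id A))) h1) (.thm (QBKext.n1 A))

/-- `A → (A∧B) ∨ (A∧¬B)`. -/
theorem Q.splitCases (A B : Formula σ) : Q (A.imp ((A.and B).or (A.and B.neg))) := by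
  have hX : Q (B.imp (A.imp ((A.and B).or (A.and B.neg)))) :=
    HD.close <| .ded <| .ded <|
      .mp (.thm (QBKext.d1 _ _)) (.mp (.mp (.thm (QBKext.c3 A B)) .h0) .h1)
  have hY : Q (B.neg.imp (A.imp ((A.and B).or (A.and B.neg)))) :=
    HD.close <| .ded <| .ded <|
      .mp (.thm (QBKext.d2 _ _)) (.mp (.mp (.thm (QBKext.c3 A B.neg)) .h0) .h1)
  exact QBKext.mp (Q.orElim hX hY) (QBKext.n1 B)

/-- `ψ ∧ (δ ∧ ¬ψ) → ⊥`. -/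
theorem Q.clash (ψ δ : Formula σ) : Q ((ψ.and (δ.and ψ.neg)).imp .bot) :=
  HD.close <| .ded <|
    .mp (.mp (.thm (QBKext.c2 δ ψ.neg)) (.mp (.thm (QBKext.c2 ψ _)) .h0))
      (.mp (.thm (QBKext.c1 ψ _)) .h0)

theorem Q.negOrL (A B : Formula σ) : Q ((A.or B).neg.imp A.neg) :=
  HD.close <| .ded <| .ded <| .mp .h1 (.mp (.thm (QBKext.d1 A B)) .h0)

theorem Q.negOrR (A B : Formula σ) : Q ((A.or B).neg.imp B.neg) :=
  HD.close <| .ded <| .ded <| .mp .h1 (.mp (.thm (QBKext.d2 A B)) .h0)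

theorem Q.fiffL {A B : Formula σ} (h : Q (A.fiff B)) : Q (A.imp B) :=
  QBKext.mp (QBKext.c1 _ _) h

theorem Q.fiffR {A B : Formula σ} (h : Q (A.fiff B)) : Q (B.imp A) :=
  QBKext.mp (QBKext.c2 _ _) h

/-- `◇(A∨B) → ◇A ∨ ◇B`. -/
theorem Q.diaOr (A B : Formula σ) : Q ((A.or B).dia.imp (A.dia.or B.dia)) := by
  have hmb : Q ((A.neg.and B.neg).box.imp ((A.or B).neg.box)) := by
    apply QBKext.mb
    apply HD.close
    apply HD.ded; apply HD.ded
    exact .mp (.mp (.mp (.thm (QBKext.d3 A B .bot))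
        (.mp (.thm (QBKext.c1 _ _)) .h1)) (.mp (.thm (QBKext.c2 _ _)) .h1)) .h0
  have base : HD Ex [(A.dia.or B.dia).neg, (A.or B).dia] Formula.bot := by
    have bA : HD Ex [(A.dia.or B.dia).neg, (A.or B).dia] A.neg.box :=
      .mp (.thm (Q.fiffL (QBKext.m2 A))) (.mp (.thm (Q.negOrL A.dia B.dia)) .h0)
    have bB : HD Ex [(A.dia.or B.dia).neg, (A.or B).dia] B.neg.box :=
      .mp (.thm (Q.fiffL (QBKext.m2 B))) (.mp (.thm (Q.negOrR A.dia B.dia)) .h0)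
    have pair := HD.mp (.mp (.thm (QBKext.c3 _ _)) bA) bB
    have bOr : HD Ex [(A.dia.or B.dia).neg, (A.or B).dia] ((A.or B).neg.box) :=
      .mp (.thm hmb) (.mp (.thm (QBKext.k1 _ _)) pair)
    have nd : HD Ex [(A.dia.or B.dia).neg, (A.or B).dia] ((A.or B).dia.neg) :=
      .mp (.thm (Q.fiffR (QBKext.m2 (A.or B)))) bOr
    exact .mp nd .h1
  exact HD.close <| .ded <| .mp (.thm (Q.dne _)) (HD.ded base)

/-- `□A → (◇B → ◇(A∧B))`. -/
theorem Q.boxDia (A B : Formula σ) : Q (A.box.imp (B.dia.imp ((A.and B).dia))) := by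
  have lemA : Q ((A.and (A.and B).neg).imp B.neg) :=
    HD.close <| .ded <| .ded <|
      .mp (.mp (.thm (QBKext.c2 A (A.and B).neg)) .h1)
        (.mp (.mp (.thm (QBKext.c3 A B)) (.mp (.thm (QBKext.c1 A _)) .h1)) .h0)
  have hmb : Q ((A.and (A.and B).neg).box.imp (B.neg.box)) := QBKext.mb lemA
  have base : HD Ex [(A.and B).dia.neg, B.dia, A.box] Formula.bot := by
    have b1 : HD Ex [(A.and B).dia.neg, B.dia, A.box] ((A.and B).neg.box) :=
      .mp (.thm (Q.fiffL (QBKext.m2 (A.and B)))) .h0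
    have pair := HD.mp (.mp (.thm (QBKext.c3 A.box ((A.and B).neg.box))) .h2) b1
    have b2 : HD Ex [(A.and B).dia.neg, B.dia, A.box] (B.neg.box) :=
      .mp (.thm hmb) (.mp (.thm (QBKext.k1 _ _)) pair)
    have b3 : HD Ex [(A.and B).dia.neg, B.dia, A.box] (B.dia.neg) :=
      .mp (.thm (Q.fiffR (QBKext.m2 B))) b2
    exact .mp b3 .h1
  exact HD.close <| .ded <| .ded <| .mp (.thm (Q.dne _)) (HD.ded base)

/-- `◇⊥ → ⊥`. -/
theorem Q.diaBot : Q ((Formula.bot : Formula σ).dia.imp .bot) := by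
  have h : Q ((Formula.bot : Formula σ).neg.box) := QBKext.k2 .bot
  exact QBKext.mp (Q.fiffR (QBKext.m2 .bot)) h

theorem Q.combine3 {D A B : Formula σ} (h1 : Q (D.imp (A.or B))) (h2 : Q (D.imp A.neg))
    (h3 : Q (D.imp B.neg)) : Q (D.imp .bot) :=
  HD.close <| .ded <|
    .mp (.mp (.mp (.thm (QBKext.d3 A B .bot)) (.mp (.thm h2) .h0))
        (.mp (.thm h3) .h0)) (.mp (.thm h1) .h0)

theorem Q.combine2 {D A : Formula σ} (h1 : Q (D.imp A)) (h2 : Q (D.imp A.neg)) :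
    Q (D.imp .bot) :=
  HD.close <| .ded <| .mp (.mp (.thm h2) .h0) (.mp (.thm h1) .h0)

/-- `∃x A → A` when `x ∉ fv A`. -/
theorem Q.exE {x : ℕ} {A : Formula σ} (hx : x ∉ A.fv) : Q ((Formula.ex x A).imp A) :=
  QBKext.br2 (Q.id A) hx

/-- `A → ∃x A`. -/
theorem Q.exI (x : ℕ) (A : Formula σ) : Q (A.imp (Formula.ex x A)) := by
  have := QBKext.q2 (Ex := Ex) (x := x) (t := .var x) (A := A) (freeFor_var_self x A)
  rwa [subst_var_self] at this

end QBKAux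
namespace QBKAux

variable {σ : Sig} {Ex : Formula σ → Prop} {Γ : Set (Formula σ)}

local notation "Q" => QBKext σ Ex

/-! #### Facts about saturated theories -/

theorem memDeriv (hsat : Saturated (QBKext σ Ex) Γ) {ψ : Formula σ} (hs : Sentence ψ)
    (h : Deriv (QBKext σ Ex) Γ ψ) : ψ ∈ Γ :=
  hsat.1.2.2.1 ψ hs ⟨[ψ], by simp, h⟩

theorem thmMem (hsat : Saturated (QBKext σ Ex) Γ) {ψ : Formula σ} (h : Q ψ)
    (hs : Sentence ψ) : ψ ∈ Γ :=
  memDeriv hsat hs (.frm h)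

theorem mpMem (hsat : Saturated (QBKext σ Ex) Γ) {ψ χ : Formula σ} (h : ψ ∈ Γ)
    (hq : Q (ψ.imp χ)) (hs : Sentence χ) : χ ∈ Γ :=
  memDeriv hsat hs (.mp (.frm hq) (.hyp h))

theorem botFree (hsat : Saturated (QBKext σ Ex) Γ) : Formula.bot ∉ Γ := by
  intro h
  apply hsat.1.2.1
  ext χ
  constructor
  · exact fun hχ => hsat.1.1 χ hχ
  · exact fun hχ => memDeriv hsat hχ (.mp (.frm (QBKext.n2 χ)) (.hyp h))

theorem consistPair (hsat : Saturated (QBKext σ Ex) Γ) {ψ : Formula σ}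
    (h1 : ψ ∈ Γ) (h2 : ψ.neg ∈ Γ) : False :=
  botFree hsat (memDeriv hsat sent_bot (.mp (.hyp h2) (.hyp h1)))

theorem diaConsist (hsat : Saturated (QBKext σ Ex) Γ) {ψ : Formula σ}
    (h : ψ.dia ∈ Γ) (hq : Q (ψ.imp .bot)) : False := by
  have hb : (Formula.bot : Formula σ).dia ∈ Γ :=
    mpMem hsat h (QBKext.md hq) (sent_dia.mpr sent_bot)
  exact botFree hsat (mpMem hsat hb Q.diaBot sent_bot)

theorem completeFor (hsat : Saturated (QBKext σ Ex) Γ) {ψ : Formula σ}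
    (hs : Sentence ψ) : ψ ∈ Γ ∨ ψ.neg ∈ Γ := by
  have h : ψ.or ψ.neg ∈ Γ :=
    thmMem hsat (QBKext.n1 ψ) (sent_or.mpr ⟨hs, sent_neg.mpr hs⟩)
  exact hsat.1.2.2.2 _ _ h

/-! #### The witness lemma -/

theorem ex_witness (hsat : Saturated (QBKext σ Ex) Γ)
    (hBa : ∀ (x : ℕ) (A : Formula σ), Q ((Formula.ex x A).dia.imp (Formula.ex x A.dia)))
    {d : Formula σ} {x : ℕ} {A : Formula σ}
    (hd : Sentence d) (hθ : Sentence (Formula.ex x A))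
    (hmem : (d.and (Formula.ex x A)).dia ∈ Γ) :
    ∃ c, ((Formula.ex x (d.and (Formula.ex x A))).and (A.subst x (.const c))).dia ∈ Γ := by
  set η := d.and (Formula.ex x A) with hη
  set ηs := Formula.ex x η with hηs
  have hηsent : Sentence η := sent_and.mpr ⟨hd, hθ⟩
  have hηsfv : ηs.fv = ∅ := sent_ex_of_sent hηsent
  have hAfv : A.fv.erase x = ∅ := hθ
  have w1 : Q ((ηs.and A).imp (Formula.ex x (ηs.and A))) := Q.exI x (ηs.and A)
  have w2 : Q (A.imp (ηs.imp (Formula.ex x (ηs.and A)))) :=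
    HD.close <| .ded <| .ded <|
      .mp (.thm w1) (.mp (.mp (.thm (QBKext.c3 ηs A)) .h0) .h1)
  have hdfv : d.fv = ∅ := hd
  have hx : x ∉ (ηs.imp (Formula.ex x (ηs.and A))).fv := by
    simp [Formula.fv, hηsfv, hdfv, hAfv]
  have w3 : Q ((Formula.ex x A).imp (ηs.imp (Formula.ex x (ηs.and A)))) := QBKext.br2 w2 hx
  have w4 : Q (η.imp (Formula.ex x (ηs.and A))) :=
    HD.close <| .ded <|
      .mp (.mp (.thm w3) (.mp (.thm (QBKext.c2 d (Formula.ex x A))) .h0))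
        (.mp (.thm (Q.exI x η)) .h0)
  have w5 : Q (η.dia.imp (Formula.ex x ((ηs.and A).dia))) :=
    Q.trans (QBKext.md w4) (hBa x (ηs.and A))
  have hsEx : Sentence (Formula.ex x ((ηs.and A).dia)) := by
    show (Formula.ex x ((ηs.and A).dia)).fv = ∅
    simp [Formula.fv, hηsfv, hdfv, hAfv]
  have hEx : Formula.ex x ((ηs.and A).dia) ∈ Γ := mpMem hsat hmem w5 hsEx
  obtain ⟨c, hc⟩ := hsat.2 x ((ηs.and A).dia) hEx
  simp only [Formula.subst, subst_ex_self] at hc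
  rw [show ηs.subst x (.const c) = ηs from subst_ex_self x _ η] at hc
  exact ⟨c, hc⟩

/-! #### The step function and the chain -/

open Classical in
noncomputable def step (Γ : Set (Formula σ)) (d θ : Formula σ) : Formula σ :=
  if h1 : Sentence θ ∧ ∃ p : ℕ × Formula σ × σ.Const, θ = Formula.ex p.1 p.2.1 ∧
      ((Formula.ex p.1 (d.and θ)).and (p.2.1.subst p.1 (.const p.2.2))).dia ∈ Γ then
    (Formula.ex h1.2.choose.1 (d.and θ)).and
      (h1.2.choose.2.1.subst h1.2.choose.1 (.const h1.2.choose.2.2))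
  else if Sentence θ ∧ (d.and θ).dia ∈ Γ then d.and θ
  else if Sentence θ ∧ (d.and θ.neg).dia ∈ Γ then d.and θ.neg
  else d

theorem step_sent_mem (hsat : Saturated (QBKext σ Ex) Γ) {d θ : Formula σ}
    (hd : Sentence d) (hdia : d.dia ∈ Γ) :
    Sentence (step Γ d θ) ∧ (step Γ d θ).dia ∈ Γ := by
  unfold step
  split_ifs with h1 h2 h3
  · have spec := h1.2.choose_spec
    constructor
    · have hθ := h1.1
      have hθ' : Sentence (Formula.ex h1.2.choose.1 h1.2.choose.2.1) := spec.1 ▸ hθ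
      exact sent_and.mpr ⟨sent_ex_of_sent (sent_and.mpr ⟨hd, hθ⟩),
        sent_subst_const hθ' _⟩
    · exact spec.2
  · exact ⟨sent_and.mpr ⟨hd, h2.1⟩, h2.2⟩
  · exact ⟨sent_and.mpr ⟨hd, sent_neg.mpr h3.1⟩, h3.2⟩
  · exact ⟨hd, hdia⟩

theorem step_imp {d θ : Formula σ} (hd : Sentence d) : Q ((step Γ d θ).imp d) := by
  unfold step
  split_ifs with h1 h2 h3
  · have hfv : (d.and θ).fv = ∅ := sent_and.mpr ⟨hd, h1.1⟩
    exact Q.trans (QBKext.c1 _ _) (Q.trans (Q.exE (by simp [hfv])) (QBKext.c1 d θ))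
  · exact QBKext.c1 d θ
  · exact QBKext.c1 d θ.neg
  · exact Q.id d

theorem step_yes {d θ : Formula σ} (hd : Sentence d) (hθ : Sentence θ)
    (hmem : (d.and θ).dia ∈ Γ) : Q ((step Γ d θ).imp θ) := by
  unfold step
  split_ifs with h1 h2 h3
  · have hfv : (d.and θ).fv = ∅ := sent_and.mpr ⟨hd, hθ⟩
    exact Q.trans (QBKext.c1 _ _) (Q.trans (Q.exE (by simp [hfv])) (QBKext.c2 d θ))
  · exact QBKext.c2 d θ
  · exact absurd ⟨hθ, hmem⟩ h2
  · exact absurd ⟨hθ, hmem⟩ h2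

theorem step_no (hsat : Saturated (QBKext σ Ex) Γ) {d θ : Formula σ}
    (hd : Sentence d) (hdia : d.dia ∈ Γ) (hθ : Sentence θ)
    (hnmem : (d.and θ).dia ∉ Γ) :
    step Γ d θ = d.and θ.neg ∧ (d.and θ.neg).dia ∈ Γ := by
  unfold step
  split_ifs with h1 h2 h3
  · exfalso
    have spec := h1.2.choose_spec
    have hfv : (d.and θ).fv = ∅ := sent_and.mpr ⟨hd, h1.1⟩
    have himp : Q (((Formula.ex h1.2.choose.1 (d.and θ)).and
        (h1.2.choose.2.1.subst h1.2.choose.1 (.const h1.2.choose.2.2))).imp (d.and θ)) :=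
      Q.trans (QBKext.c1 _ _) (Q.exE (by simp [hfv]))
    exact hnmem (mpMem hsat spec.2 (QBKext.md himp) (sent_and.mpr ⟨hd, hθ⟩))
  · exact absurd h2.2 hnmem
  · exact ⟨rfl, h3.2⟩
  · exfalso
    have hsplit : Q (d.dia.imp (((d.and θ).dia).or ((d.and θ.neg).dia))) :=
      Q.trans (QBKext.md (Q.splitCases d θ)) (Q.diaOr _ _)
    have hor : ((d.and θ).dia).or ((d.and θ.neg).dia) ∈ Γ :=
      mpMem hsat hdia hsplit
        (sent_or.mpr ⟨sent_and.mpr ⟨hd, hθ⟩, sent_and.mpr ⟨hd, sent_neg.mpr hθ⟩⟩)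
    rcases hsat.1.2.2.2 _ _ hor with h | h
    · exact hnmem h
    · exact h3 ⟨hθ, h⟩

theorem step_ex (hsat : Saturated (QBKext σ Ex) Γ)
    (hBa : ∀ (x : ℕ) (A : Formula σ), Q ((Formula.ex x A).dia.imp (Formula.ex x A.dia)))
    {d : Formula σ} {x : ℕ} {A : Formula σ}
    (hd : Sentence d) (hθ : Sentence (Formula.ex x A))
    (hmem : (d.and (Formula.ex x A)).dia ∈ Γ) :
    ∃ c, Sentence (A.subst x (.const c)) ∧
      Q ((step Γ d (Formula.ex x A)).imp (A.subst x (.const c))) := by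
  obtain ⟨c, hc⟩ := ex_witness hsat hBa hd hθ hmem
  have h1 : Sentence (Formula.ex x A) ∧ ∃ p : ℕ × Formula σ × σ.Const,
      Formula.ex x A = Formula.ex p.1 p.2.1 ∧
      ((Formula.ex p.1 (d.and (Formula.ex x A))).and
        (p.2.1.subst p.1 (.const p.2.2))).dia ∈ Γ :=
    ⟨hθ, ⟨(x, A, c), rfl, hc⟩⟩
  unfold step
  rw [dif_pos h1]
  have spec := h1.2.choose_spec
  have hx : x = h1.2.choose.1 ∧ A = h1.2.choose.2.1 := by
    have := spec.1
    exact ⟨by injection this, by injection this⟩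
  refine ⟨h1.2.choose.2.2, ?_, ?_⟩
  · exact sent_subst_const hθ _
  · rw [← hx.1, ← hx.2]
    exact QBKext.c2 _ _

noncomputable def chain (Γ : Set (Formula σ)) (e : ℕ → Formula σ) (φ : Formula σ) :
    ℕ → Formula σ
  | 0 => φ
  | n + 1 => step Γ (chain Γ e φ n) (e n)

theorem chain_succ (Γ : Set (Formula σ)) (e : ℕ → Formula σ) (φ : Formula σ) (n : ℕ) :
    chain Γ e φ (n + 1) = step Γ (chain Γ e φ n) (e n) := rfl

theorem disj_all {χ : Formula σ} :
    ∀ l : List (Formula σ), l ≠ [] → (∀ ψ ∈ l, ψ = χ) → Q ((disjList l).imp χ)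
  | [] => fun h _ => absurd rfl h
  | [a] => fun _ h => by
      rw [show disjList [a] = a from rfl, h a (by simp)]
      exact Q.id χ
  | a :: b :: t => fun _ h => by
      have ha := h a (by simp)
      have ih := disj_all (b :: t) (by simp) (fun ψ hψ => h ψ (by simp [hψ]))
      rw [show disjList (a :: b :: t) = a.or (disjList (b :: t)) from rfl, ha]
      exact Q.orElim (Q.id χ) ih

/-! #### The existence lemma (generic form) -/

theorem existence [Countable σ.Pred] [Countable σ.Const]
    (hBa : ∀ (x : ℕ) (A : Formula σ), Q ((Formula.ex x A).dia.imp (Formula.ex x A.dia)))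
    (hsat : Saturated (QBKext σ Ex) Γ) {φ : Formula σ} (hφ : Sentence φ)
    (hdia : φ.dia ∈ Γ) :
    ∃ Γ' : Set (Formula σ), Saturated (QBKext σ Ex) Γ' ∧ {ψ | ψ.box ∈ Γ} ⊆ Γ' ∧ φ ∈ Γ' := by
  obtain ⟨e, he⟩ := exists_surjective_nat (Formula σ)
  set C := chain Γ e φ with hC
  have inv : ∀ n, Sentence (C n) ∧ (C n).dia ∈ Γ := by
    intro n
    induction n with
    | zero => exact ⟨hφ, hdia⟩
    | succ n ih => exact step_sent_mem hsat ih.1 ih.2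
  have mono : ∀ m n, m ≤ n → Q ((C n).imp (C m)) := by
    intro m n h
    induction n with
    | zero =>
      have : m = 0 := Nat.le_zero.mp h
      subst this; exact Q.id _
    | succ n ih =>
      rcases Nat.lt_or_ge m (n+1) with h' | h'
      · exact Q.trans (step_imp (inv n).1) (ih (Nat.lt_succ_iff.mp h'))
      · have : m = n + 1 := le_antisymm h h'
        subst this; exact Q.id _
  have ccons : ∀ n, Q ((C n).imp .bot) → False := fun n h => diaConsist hsat (inv n).2 h
  set Γ' : Set (Formula σ) := {χ | Sentence χ ∧ ∃ n, Q ((C n).imp χ)} with hΓ'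
  have decide : ∀ θ : Formula σ, Sentence θ → θ ∈ Γ' ∨ θ.neg ∈ Γ' := by
    intro θ hs
    obtain ⟨m, rfl⟩ := he θ
    by_cases h : ((C m).and (e m)).dia ∈ Γ
    · exact Or.inl ⟨hs, m + 1, by
        rw [hC, chain_succ]
        exact step_yes (inv m).1 hs h⟩
    · obtain ⟨heq, _⟩ := step_no hsat (inv m).1 (inv m).2 hs h
      exact Or.inr ⟨sent_neg.mpr hs, m + 1, by
        rw [hC, chain_succ, heq]
        exact QBKext.c2 _ _⟩
  have notBoth : ∀ χ : Formula σ, χ ∈ Γ' → χ.neg ∈ Γ' → False := by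
    rintro χ ⟨_, n1, a⟩ ⟨_, n2, b⟩
    have a' : Q ((C (max n1 n2)).imp χ) := Q.trans (mono n1 _ (le_max_left _ _)) a
    have b' : Q ((C (max n1 n2)).imp χ.neg) := Q.trans (mono n2 _ (le_max_right _ _)) b
    exact ccons _ (Q.combine2 a' b')
  have bound : ∀ {ψ : Formula σ}, Deriv (QBKext σ Ex) Γ' ψ → ∃ n, Q ((C n).imp ψ) := by
    intro ψ h
    induction h with
    | hyp h => exact h.2
    | frm h => exact ⟨0, Q.constImp h⟩
    | mp h1 h2 ih1 ih2 =>
      obtain ⟨n1, a⟩ := ih1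
      obtain ⟨n2, b⟩ := ih2
      refine ⟨max n1 n2, ?_⟩
      have a' := Q.trans (mono n1 _ (le_max_left n1 n2)) a
      have b' := Q.trans (mono n2 _ (le_max_right n1 n2)) b
      exact QBKext.mp (QBKext.mp (QBKext.i2 _ _ _) a') b'
    | @br1 φ1 ψ1 x h hx ih =>
      obtain ⟨n, a⟩ := ih
      have hs : (C n).fv = ∅ := (inv n).1
      have hx' : x ∉ ((C n).and φ1).fv := by simp [Formula.fv, hs, hx]
      exact ⟨n, Q.curry (QBKext.br1 (Q.uncurry a) hx')⟩
    | @br2 φ1 ψ1 x h hx ih =>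
      obtain ⟨n, a⟩ := ih
      have hs : (C n).fv = ∅ := (inv n).1
      have hx' : x ∉ ((C n).imp ψ1).fv := by simp [Formula.fv, hs, hx]
      exact ⟨n, Q.swap (QBKext.br2 (Q.swap a) hx')⟩
  have closure : ∀ χ : Formula σ, Sentence χ → DerivSet (QBKext σ Ex) Γ' {χ} → χ ∈ Γ' := by
    rintro χ hχ ⟨l, hl, hder⟩
    obtain ⟨n, hb⟩ := bound hder
    cases l with
    | nil => exact (ccons n hb).elim
    | cons a t =>
      refine ⟨hχ, n, Q.trans hb (disj_all (a :: t) (by simp) ?_)⟩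
      exact fun ψ hψ => hl ψ hψ
  have prime : ∀ A B : Formula σ, A.or B ∈ Γ' → A ∈ Γ' ∨ B ∈ Γ' := by
    intro A B hAB
    have hsA : Sentence A := (sent_or.mp hAB.1).1
    have hsB : Sentence B := (sent_or.mp hAB.1).2
    by_cases hA : A ∈ Γ'
    · exact Or.inl hA
    by_cases hB : B ∈ Γ'
    · exact Or.inr hB
    exfalso
    have hnA : A.neg ∈ Γ' := (decide A hsA).resolve_left hA
    have hnB : B.neg ∈ Γ' := (decide B hsB).resolve_left hB
    obtain ⟨_, n0, h0⟩ := hAB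
    obtain ⟨_, n1, h1⟩ := hnA
    obtain ⟨_, n2, h2⟩ := hnB
    set N := max n0 (max n1 n2) with hN
    have h0' := Q.trans (mono n0 N (le_max_left _ _)) h0
    have h1' := Q.trans (mono n1 N (le_trans (le_max_left _ _) (le_max_right _ _))) h1
    have h2' := Q.trans (mono n2 N (le_trans (le_max_right _ _) (le_max_right _ _))) h2
    exact ccons N (Q.combine3 h0' h1' h2')
  have neAll : Γ' ≠ {φ | Sentence φ} := by
    intro h
    have hb : Formula.bot ∈ Γ' := by rw [h]; exact sent_bot
    obtain ⟨_, n, hn⟩ := hb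
    exact ccons n hn
  have satG : ∀ (x : ℕ) (A : Formula σ), Formula.ex x A ∈ Γ' →
      ∃ c, A.subst x (.const c) ∈ Γ' := by
    intro x A hmem'
    obtain ⟨m, hm⟩ := he (Formula.ex x A)
    have hsθ : Sentence (e m) := by rw [hm]; exact hmem'.1
    by_cases h : ((C m).and (e m)).dia ∈ Γ
    · have hmem2 : ((C m).and (Formula.ex x A)).dia ∈ Γ := by rw [← hm]; exact h
      obtain ⟨c, hsc, himp⟩ := step_ex hsat hBa (inv m).1 hmem'.1 hmem2
      refine ⟨c, hsc, m + 1, ?_⟩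
      rw [hC, chain_succ, hm]
      exact himp
    · exfalso
      obtain ⟨heq, _⟩ := step_no hsat (inv m).1 (inv m).2 hsθ h
      have : (e m).neg ∈ Γ' := ⟨sent_neg.mpr hsθ, m + 1, by
        rw [hC, chain_succ, heq]; exact QBKext.c2 _ _⟩
      rw [hm] at this
      exact notBoth _ hmem' this
  have boxSub : {ψ | ψ.box ∈ Γ} ⊆ Γ' := by
    intro ψ hψ
    have hψ' : ψ.box ∈ Γ := hψ
    have hsψ : Sentence ψ := sent_box.mp (hsat.1.1 ψ.box hψ')
    obtain ⟨m, hm⟩ := he ψ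
    have hsθ : Sentence (e m) := by rw [hm]; exact hsψ
    by_cases h : ((C m).and (e m)).dia ∈ Γ
    · refine ⟨hsψ, m + 1, ?_⟩
      rw [hC, chain_succ, ← hm]
      exact step_yes (inv m).1 hsθ h
    · exfalso
      obtain ⟨heq, hmem2⟩ := step_no hsat (inv m).1 (inv m).2 hsθ h
      rw [hm] at hmem2
      have hppair : (ψ.and ((C m).and ψ.neg)).dia ∈ Γ :=
        memDeriv hsat
          (sent_and.mpr ⟨hsψ, sent_and.mpr ⟨(inv m).1, sent_neg.mpr hsψ⟩⟩)
          (.mp (.mp (.frm (Q.boxDia ψ ((C m).and ψ.neg))) (.hyp hψ')) (.hyp hmem2))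
      exact diaConsist hsat hppair (Q.clash ψ (C m))
  refine ⟨Γ', ⟨⟨fun χ hχ => hχ.1, neAll, closure, prime⟩, satG⟩, boxSub, ⟨hφ, 0, Q.id φ⟩⟩

end QBKAux
/-- **Existence lemma for the constant-domain canonical model**: for σ countable and σ★ a
suitable enrichment, a saturated σ★-theory Γ (w.r.t. QBK♯) contains ◇Φ iff some saturated
σ★-theory Γ′ ⊇ {Ψ : □Ψ∈Γ} contains Φ, and contains □Φ iff every such Γ′ contains Φ. -/
theorem sharp_existence_lemma (σ : Sig) [Countable σ.Pred] [Countable σ.Const] (Sstar : Type)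
    (hcard : Cardinal.mk Sstar = Cardinal.mk {φ : Formula σ // Sentence φ}) :
    ∀ Γ : Set (Formula (sigExt σ Sstar)), Saturated (QBKsharp (sigExt σ Sstar)) Γ →
      ∀ φ : Formula (sigExt σ Sstar), Sentence φ →
        (φ.dia ∈ Γ ↔ ∃ Γ' : Set (Formula (sigExt σ Sstar)),
            Saturated (QBKsharp (sigExt σ Sstar)) Γ' ∧ {ψ | ψ.box ∈ Γ} ⊆ Γ' ∧ φ ∈ Γ') ∧
        (φ.box ∈ Γ ↔ ∀ Γ' : Set (Formula (sigExt σ Sstar)),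
            Saturated (QBKsharp (sigExt σ Sstar)) Γ' → {ψ | ψ.box ∈ Γ} ⊆ Γ' → φ ∈ Γ') := by
  classical
  have hctS : Countable Sstar := by
    apply Cardinal.mk_le_aleph0_iff.mp
    rw [hcard]
    exact Cardinal.mk_le_aleph0
  haveI : Countable (sigExt σ Sstar).Pred := (inferInstance : Countable σ.Pred)
  haveI : Countable (sigExt σ Sstar).Const := (inferInstance : Countable (σ.Const ⊕ Sstar))
  intro Γ hΓ φ hφ
  have hBa : ∀ (x : ℕ) (A : Formula (sigExt σ Sstar)),
      QBKext (sigExt σ Sstar) (BaAx (sigExt σ Sstar))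
        ((Formula.ex x A).dia.imp (Formula.ex x A.dia)) :=
    fun x A => .extra ⟨x, A, rfl⟩
  have hΓ' : Saturated (QBKext (sigExt σ Sstar) (BaAx (sigExt σ Sstar))) Γ := hΓ
  constructor
  · constructor
    · intro h
      exact QBKAux.existence hBa hΓ' hφ h
    · rintro ⟨Γ2, hΓ2, hsub, hmem⟩
      by_contra hnd
      have h1 : φ.dia.neg ∈ Γ :=
        (QBKAux.completeFor hΓ' (QBKAux.sent_dia.mpr hφ)).resolve_left hnd
      have h2 : φ.neg.box ∈ Γ :=
        QBKAux.mpMem hΓ' h1 (QBKAux.Q.fiffL (QBKext.m2 φ))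
          (QBKAux.sent_box.mpr (QBKAux.sent_neg.mpr hφ))
      have h3 : φ.neg ∈ Γ2 := hsub h2
      exact QBKAux.consistPair (Γ := Γ2) hΓ2 hmem h3
  · constructor
    · intro h Γ2 _ hsub
      exact hsub h
    · intro hall
      by_contra hnb
      have h1 : φ.box.neg ∈ Γ :=
        (QBKAux.completeFor hΓ' (QBKAux.sent_box.mpr hφ)).resolve_left hnb
      have h2 : φ.neg.dia ∈ Γ :=
        QBKAux.mpMem hΓ' h1 (QBKAux.Q.fiffL (QBKext.m1 φ))
          (QBKAux.sent_dia.mpr (QBKAux.sent_neg.mpr hφ))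
      obtain ⟨Γ2, hΓ2, hsub, hmem⟩ :=
        QBKAux.existence hBa hΓ' (QBKAux.sent_neg.mpr hφ) h2
      exact QBKAux.consistPair (Γ := Γ2) hΓ2 (hall Γ2 hΓ2 hsub) hmem
end
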